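/- arXiv:1505.05034 — 12 statements merged into one kernel-verified Lean document; each statement's English description precedes it below -/
import Mathlib

section
/- Let F be a finite field with q elements and K/F a field extension of degree n. If χ is a multiplicative character of K* that is nontrivial on F*, then the singular Eisenstein sum E₀(χ) = Σ_{s ∈ K*, Tr(s)=0} χ(s) equals 0. -/
open Finset

theorem eisenstein_singular_eq_zero_of_nontrivial_on_base
    (F K : Type*) [Field F] [Field K] [Fintype F] [Fintype K] [DecidableEq F] [DecidableEq K]
    [Algebra F K] (χ : Kˣ →* ℂ)
    (hχ : ∃ u : Fˣ, χ (Units.map (algebraMap F K : F →+* K).toMonoidHom u) ≠ 1) :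
    ∑ s ∈ Finset.univ.filter (fun s : Kˣ => Algebra.trace F K (s : K) = 0), χ s = 0 := by
  obtain ⟨u, hu⟩ := hχ
  set v : Kˣ := Units.map (algebraMap F K : F →+* K).toMonoidHom u with hv
  set T := Finset.univ.filter (fun s : Kˣ => Algebra.trace F K (s : K) = 0) with hT
  have hvK : (v : K) = algebraMap F K (u : F) := rfl
  have hmem : ∀ i : Kˣ, i ∈ T ↔ (Equiv.mulLeft v) i ∈ T := by
    intro i
    simp only [hT, Finset.mem_filter, Finset.mem_univ, true_and, Equiv.coe_mulLeft,
      Units.val_mul, hvK]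
    rw [← Algebra.smul_def, map_smul, smul_eq_mul]
    constructor
    · intro h; rw [h, mul_zero]
    · intro h
      rcases mul_eq_zero.mp h with h' | h'
      · exact absurd h' u.ne_zero
      · exact h'
  have key : ∑ i ∈ T, χ (v * i) = ∑ i ∈ T, χ i := by
    refine Finset.sum_equiv (Equiv.mulLeft v) hmem ?_
    intro i _; rfl
  have key2 : χ v * ∑ i ∈ T, χ i = ∑ i ∈ T, χ i := by
    calc χ v * ∑ i ∈ T, χ i = ∑ i ∈ T, χ (v * i) := by
          rw [Finset.mul_sum]; exact Finset.sum_congr rfl fun i _ => (map_mul χ v i).symm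
      _ = ∑ i ∈ T, χ i := key
  have : (χ v - 1) * ∑ i ∈ T, χ i = 0 := by ring_nf; rw [key2, sub_self]
  rcases mul_eq_zero.mp this with h | h
  · exact absurd (by linear_combination h) hu
  · exact h
end

section
/- Let F be a finite field with q elements and K/F a field extension of degree n. If χ is a multiplicative character of K* that is nontrivial on K* but trivial on F*, then E₀(χ) = -(q-1)·E(χ), where E(χ) = Σ_{Tr(s)=1} χ(s) and E₀(χ) = Σ_{s∈K*, Tr(s)=0} χ(s). -/
open Finset

lemma trace_algebraMap_mul_aux (F K : Type*) [Field F] [Field K] [Fintype F] [Fintype K]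
    [Algebra F K] (c : F) (x : K) :
    Algebra.trace F K (algebraMap F K c * x) = c * Algebra.trace F K x := by
  rw [← Algebra.smul_def, map_smul, smul_eq_mul]

theorem eisenstein_singular_eq_neg_mul_of_trivial_on_base
    (F K : Type*) [Field F] [Field K] [Fintype F] [Fintype K] [DecidableEq F] [DecidableEq K]
    [Algebra F K] (q : ℕ) (hq : Fintype.card F = q) (χ : Kˣ →* ℂ)
    (hχ : χ ≠ 1)
    (hres : ∀ u : Fˣ, χ (Units.map (algebraMap F K : F →+* K).toMonoidHom u) = 1) :
    ∑ s ∈ Finset.univ.filter (fun s : Kˣ => Algebra.trace F K (s : K) = 0), χ s =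
      -((q : ℂ) - 1) *
        ∑ s ∈ Finset.univ.filter (fun s : Kˣ => Algebra.trace F K (s : K) = 1), χ s := by
  classical
  set T : Kˣ → F := fun s => Algebra.trace F K (s : K) with hT
  have key : ∀ c : F, c ≠ 0 →
      ∑ s ∈ univ.filter (fun s : Kˣ => T s = c), χ s
        = ∑ s ∈ univ.filter (fun s : Kˣ => T s = 1), χ s := by
    intro c hc
    set u : Kˣ := Units.map (algebraMap F K : F →+* K).toMonoidHom (Units.mk0 c hc) with hu
    have hχu : χ u = 1 := hres _
    have hucoe : (u : K) = algebraMap F K c := rfl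
    have huinv : ((u⁻¹ : Kˣ) : K) = algebraMap F K c⁻¹ := by
      rw [← map_inv]; rfl
    refine Finset.sum_bij' (fun s _ => u⁻¹ * s) (fun s _ => u * s) ?_ ?_ ?_ ?_ ?_
    · intro a ha
      simp only [mem_filter, mem_univ, true_and, hT] at ha ⊢
      rw [Units.val_mul, huinv, trace_algebraMap_mul_aux, ha, inv_mul_cancel₀ hc]
    · intro a ha
      simp only [mem_filter, mem_univ, true_and, hT] at ha ⊢
      rw [Units.val_mul, hucoe, trace_algebraMap_mul_aux, ha, mul_one]
    · intro a _; simp [← mul_assoc]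
    · intro a _; simp [← mul_assoc]
    · intro a _; simp [map_mul, map_inv, hχu]
  have h0 : ∑ s : Kˣ, χ s = 0 := sum_hom_units_eq_zero χ hχ
  have hfib : ∑ c : F, ∑ s ∈ univ.filter (fun s : Kˣ => T s = c), χ s = ∑ s : Kˣ, χ s :=
    Finset.sum_fiberwise _ _ _
  have hsplit : ∑ c : F, ∑ s ∈ univ.filter (fun s : Kˣ => T s = c), χ s
      = (∑ s ∈ univ.filter (fun s : Kˣ => T s = 0), χ s)
        + ∑ c ∈ univ.erase (0 : F), ∑ s ∈ univ.filter (fun s : Kˣ => T s = c), χ s :=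
    (Finset.add_sum_erase _ _ (mem_univ 0)).symm
  have herase : ∑ c ∈ univ.erase (0 : F), ∑ s ∈ univ.filter (fun s : Kˣ => T s = c), χ s
      = ((q : ℂ) - 1) * ∑ s ∈ univ.filter (fun s : Kˣ => T s = 1), χ s := by
    rw [Finset.sum_congr rfl (fun c hc => key c (Finset.ne_of_mem_erase hc)),
      Finset.sum_const, Finset.card_erase_of_mem (mem_univ 0), Finset.card_univ, hq,
      nsmul_eq_mul]
    congr 1
    have hq1 : 1 ≤ q := hq ▸ Fintype.card_pos
    push_cast [Nat.cast_sub hq1]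
    ring
  have := hsplit ▸ (hfib.trans h0)
  rw [herase] at this
  have h := this
  linear_combination h
end

section
/- Let F be a finite field with q elements and K/F an extension of degree n. If χ is a multiplicative character of K* that is nontrivial on F*, then the Eisenstein sum E(χ) = Σ_{Tr(s)=1} χ(s) has absolute value q^{(n-1)/2}. -/
/-!
Fix a primitive additive character `ψ` of `F`; then `ψ ∘ Tr` is a primitive additive character
of `K`. Sorting the Gauss sum `g(χ, ψ ∘ Tr)` by the value `t` of the trace, multiplication by
`t ∈ Fˣ` carries the trace-one hyperplane onto the fibre over `t`, so that fibre contributes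
`χ(t) ψ(t) E(χ)`, while the fibre over `0` contributes nothing because `χ` is nontrivial on `Fˣ`.
Hence `g(χ, ψ ∘ Tr) = g(χ|_F, ψ) E(χ)`, and since a Gauss sum of a nontrivial character has
absolute value the square root of the size of the field, `|E(χ)| = q^(n/2) / q^(1/2)`.
-/

open Finset

namespace MulChar

variable {M N R G : Type*} [CommMonoid M] [CommMonoid N] [CommMonoidWithZero R]
  [FunLike G M N] [MonoidHomClass G M N]

def comap (χ : MulChar N R) (f : G) [IsLocalHom f] : MulChar M R where
  toFun a := χ (f a)
  map_one' := by simp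
  map_mul' a b := by simp
  map_nonunit' a ha := χ.map_nonunit fun h => ha (h.of_map f a)

@[simp]
lemma comap_apply (χ : MulChar N R) (f : G) [IsLocalHom f] (a : M) :
    χ.comap f a = χ (f a) :=
  rfl

lemma ne_one_of_comap_ne_one {χ : MulChar N R} {f : G} [IsLocalHom f] (h : χ.comap f ≠ 1) :
    χ ≠ 1 := by
  rintro rfl
  exact h (by ext a; simp [MulChar.one_apply (R' := R) (a.isUnit.map f)])

end MulChar

lemma norm_gaussSum_eq_sqrt_card {F : Type*} [Field F] [Fintype F] {χ : MulChar F ℂ}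
    {ψ : AddChar F ℂ} (hχ : χ ≠ 1) (hψ : ψ.IsPrimitive) :
    ‖gaussSum χ ψ‖ = √(Fintype.card F) := by
  have h : (‖gaussSum χ ψ‖ ^ 2 : ℂ) = Fintype.card F := by
    rw [← Complex.mul_conj', ← Complex.star_def, star_gaussSum_eq,
      gaussSum_mul_gaussSum_eq_card hχ hψ]
  rw [← Real.sqrt_sq (norm_nonneg _)]
  exact congrArg Real.sqrt (by exact_mod_cast h)

lemma AddChar.IsPrimitive.compAddMonoidHom_trace {F K R : Type*} [Field F] [Field K]
    [Algebra F K] [FiniteDimensional F K] [Algebra.IsSeparable F K] [CommMonoid R]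
    {ψ : AddChar F R} (hψ : ψ.IsPrimitive) :
    (ψ.compAddMonoidHom (Algebra.trace F K).toAddMonoidHom).IsPrimitive := by
  refine AddChar.IsPrimitive.of_ne_one fun h => hψ one_ne_zero ?_
  ext a
  obtain ⟨x, rfl⟩ := Algebra.trace_surjective F K a
  simpa using DFunLike.congr_fun h x

section Eisenstein

variable (F : Type*) {K R : Type*} [Field F] [DecidableEq F] [Field K] [Fintype K] [Algebra F K]
  [CommRing R]

noncomputable def eisensteinSum (χ : MulChar K R) : R :=
  ∑ x with Algebra.trace F K x = 1, χ x

variable {F}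

lemma sum_filter_trace_eq_mul (χ : MulChar K R) {a : F} (ha : a ≠ 0) (t : F) :
    ∑ x with Algebra.trace F K x = a * t, χ x =
      χ (algebraMap F K a) * ∑ x with Algebra.trace F K x = t, χ x := by
  have hc : algebraMap F K a ≠ 0 := (map_ne_zero _).2 ha
  have htrace (x : K) : Algebra.trace F K (algebraMap F K a * x) = a * Algebra.trace F K x := by
    rw [← Algebra.smul_def, map_smul, smul_eq_mul]
  rw [sum_filter, sum_filter, mul_sum, ← Equiv.sum_comp (Equiv.mulLeft₀ _ hc)]
  simp only [Equiv.mulLeft₀_apply, htrace, mul_right_inj' ha, map_mul, mul_ite, mul_zero]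

lemma sum_filter_trace_eq_comap_mul_eisensteinSum [IsDomain R] {χ : MulChar K R}
    (hχ : χ.comap (algebraMap F K) ≠ 1) (t : F) :
    ∑ x with Algebra.trace F K x = t, χ x = χ.comap (algebraMap F K) t * eisensteinSum F χ := by
  rcases eq_or_ne t 0 with rfl | ht
  · obtain ⟨u, hu⟩ := MulChar.ne_one_iff.1 hχ
    have h := sum_filter_trace_eq_mul χ u.ne_zero 0
    rw [mul_zero] at h
    have h' : (χ (algebraMap F K u) - 1) * ∑ x with Algebra.trace F K x = 0, χ x = 0 := by
      rw [sub_mul, ← h, one_mul, sub_self]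
    rw [MulChar.map_zero, zero_mul]
    exact (mul_eq_zero.1 h').resolve_left (sub_ne_zero.2 hu)
  · rw [← mul_one t, sum_filter_trace_eq_mul χ ht, mul_one]
    rfl

lemma gaussSum_compAddMonoidHom_trace [Fintype F] [IsDomain R] {χ : MulChar K R}
    (hχ : χ.comap (algebraMap F K) ≠ 1) (ψ : AddChar F R) :
    gaussSum χ (ψ.compAddMonoidHom (Algebra.trace F K).toAddMonoidHom) =
      gaussSum (χ.comap (algebraMap F K)) ψ * eisensteinSum F χ := by
  calc gaussSum χ (ψ.compAddMonoidHom (Algebra.trace F K).toAddMonoidHom)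
    _ = ∑ t : F, (∑ x with Algebra.trace F K x = t, χ x) * ψ t := by
        rw [gaussSum, ← sum_fiberwise univ (Algebra.trace F K)]
        refine sum_congr rfl fun t _ => ?_
        rw [sum_mul]
        refine sum_congr rfl fun x hx => ?_
        rw [AddChar.compAddMonoidHom_apply, LinearMap.toAddMonoidHom_coe, (mem_filter.1 hx).2]
    _ = _ := by
        simp_rw [sum_filter_trace_eq_comap_mul_eisensteinSum hχ, gaussSum, sum_mul]
        exact sum_congr rfl fun t _ => mul_right_comm ..

lemma eisensteinSum_ofUnitHom [DecidableEq K] (f : Kˣ →* Rˣ) :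
    eisensteinSum F (MulChar.ofUnitHom f) =
      ∑ s ∈ univ.filter (fun s : Kˣ => Algebra.trace F K (s : K) = 1), (f s : R) := by
  symm
  refine sum_bij (fun s _ => (s : K)) (fun s hs => by simpa using hs)
    (fun s _ t _ => Units.ext) (fun x hx => ?_) (fun s _ => (MulChar.ofUnitHom_coe f s).symm)
  have hx : Algebra.trace F K x = 1 := (mem_filter.1 hx).2
  have hx0 : x ≠ 0 := by rintro rfl; simp at hx
  exact ⟨Units.mk0 x hx0, by simpa using hx, rfl⟩

theorem norm_eisensteinSum [Fintype F] {χ : MulChar K ℂ} (hχ : χ.comap (algebraMap F K) ≠ 1) :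
    ‖eisensteinSum F χ‖ = (Fintype.card F : ℝ) ^ (((Module.finrank F K : ℝ) - 1) / 2) := by
  have hq : (0 : ℝ) < Fintype.card F := by exact_mod_cast Fintype.card_pos
  set ψ := AddChar.FiniteField.primitiveChar_to_Complex F
  have hψ : ψ.IsPrimitive := AddChar.FiniteField.primitiveChar_to_Complex_isPrimitive F
  have hfactor := congrArg norm (gaussSum_compAddMonoidHom_trace hχ ψ)
  rw [norm_mul, norm_gaussSum_eq_sqrt_card (MulChar.ne_one_of_comap_ne_one hχ)
    hψ.compAddMonoidHom_trace, norm_gaussSum_eq_sqrt_card hχ hψ,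
    Module.card_eq_pow_finrank (K := F), Nat.cast_pow] at hfactor
  rw [eq_div_of_mul_eq (by positivity) (hfactor.trans (mul_comm _ _)).symm,
    Real.sqrt_eq_rpow, Real.sqrt_eq_rpow, ← Real.rpow_natCast, ← Real.rpow_mul hq.le,
    ← Real.rpow_sub hq]
  congr 1
  ring

end Eisenstein

theorem abs_eisenstein_of_nontrivial_on_base
    (F K : Type*) [Field F] [Field K] [Fintype F] [Fintype K] [DecidableEq F] [DecidableEq K]
    [Algebra F K] (q n : ℕ) (hq : Fintype.card F = q) (hn : Module.finrank F K = n)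
    (χ : Kˣ →* ℂ)
    (hχ : ∃ u : Fˣ, χ (Units.map (algebraMap F K : F →+* K).toMonoidHom u) ≠ 1) :
    ‖(∑ s ∈ Finset.univ.filter (fun s : Kˣ => Algebra.trace F K (s : K) = 1), χ s)‖ =
      (q : ℝ) ^ (((n : ℝ) - 1) / 2) := by
  set χ' : MulChar K ℂ := MulChar.ofUnitHom χ.toHomUnits
  have hχ' : χ'.comap (algebraMap F K) ≠ 1 := by
    obtain ⟨u, hu⟩ := hχ
    exact MulChar.ne_one_iff.2 ⟨u, (MulChar.ofUnitHom_coe _ (Units.map _ u)).trans_ne hu⟩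
  have hsum := eisensteinSum_ofUnitHom (F := F) χ.toHomUnits
  simp only [MonoidHom.coe_toHomUnits] at hsum
  rw [← hsum, norm_eisensteinSum hχ', hq, hn]
end

section
/- Let F be a finite field with q elements and K/F an extension of degree n. If χ is a nontrivial multiplicative character of K* that is trivial on F*, then |E(χ)| = q^{n/2 - 1}, where E(χ) = Σ_{Tr(s)=1} χ(s). -/
/-!
Write `E_t = ∑_{Tr x = t} χ x`. Scaling by `c ∈ Fˣ` permutes the fibres of the trace and,
as `χ` is trivial on `Fˣ`, gives `E_t = E_1` for `t ≠ 0`; moreover `∑_t E_t = ∑_x χ x = 0`.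
For a nontrivial additive character `ψ` of `F` the Gauss sum of `χ` and `ψ ∘ Tr` is then
`∑_t E_t ψ t = ∑_t E_t (ψ t - 1) = E_1 ∑_t (ψ t - 1) = -q E_1`, and its absolute value is
`√(#K) = q^(n/2)`.
-/

open Finset

lemma sum_units_val_eq_sum {G₀ M : Type*} [GroupWithZero G₀] [Fintype G₀] [DecidableEq G₀]
    [AddCommMonoid M] (f : G₀ → M) (h0 : f 0 = 0) : ∑ u : G₀ˣ, f u = ∑ x, f x := by
  rw [← sum_erase univ h0, sum_subtype (univ.erase 0) (p := (· ≠ 0)) (by simp)]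
  exact Fintype.sum_equiv unitsEquivNeZero _ _ fun _ => rfl

lemma AddChar.compAddMonoidHom_trace_ne_one {F K R : Type*} [Field F] [Field K] [Algebra F K]
    [FiniteDimensional F K] [Algebra.IsSeparable F K] [CommMonoid R] {ψ : AddChar F R}
    (hψ : ψ ≠ 1) : ψ.compAddMonoidHom (Algebra.trace F K).toAddMonoidHom ≠ 1 := by
  obtain ⟨a, ha⟩ := AddChar.ne_one_iff.mp hψ
  obtain ⟨x, rfl⟩ := Algebra.trace_surjective F K a
  exact AddChar.ne_one_iff.mpr ⟨x, ha⟩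

lemma norm_gaussSum_sq {R : Type*} [Field R] [Fintype R] {χ : MulChar R ℂ} (hχ : χ ≠ 1)
    {ψ : AddChar R ℂ} (hψ : ψ.IsPrimitive) : ‖gaussSum χ ψ‖ ^ 2 = Fintype.card R := by
  have h := gaussSum_mul_gaussSum_eq_card hχ hψ
  rw [← star_gaussSum_eq, Complex.star_def, Complex.mul_conj] at h
  rw [Complex.sq_norm]
  exact_mod_cast h

namespace MulChar

variable (F : Type*) {K R : Type*} [Field F] [Field K] [Fintype K] [DecidableEq F]
  [Algebra F K] [CommRing R]

noncomputable def eisensteinSum (χ : MulChar K R) (t : F) : R :=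
  ∑ x with Algebra.trace F K x = t, χ x

variable {F} (χ : MulChar K R)

lemma sum_units_eq_eisensteinSum [DecidableEq K] [Nontrivial R] (t : F) :
    ∑ u ∈ univ.filter (fun u : Kˣ => Algebra.trace F K u = t), χ u =
      eisensteinSum F χ t := by
  rw [eisensteinSum, sum_filter, sum_filter]
  exact sum_units_val_eq_sum (fun x => if Algebra.trace F K x = t then χ x else 0) (by simp)

lemma eisensteinSum_mul (c : Fˣ) (t : F) :
    eisensteinSum F χ (c * t) = χ (algebraMap F K c) * eisensteinSum F χ t := by
  have hc : algebraMap F K c ≠ 0 := by simp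
  have htrace (y : K) : Algebra.trace F K (algebraMap F K c * y) = c * Algebra.trace F K y := by
    rw [← Algebra.smul_def, map_smul, smul_eq_mul]
  rw [eisensteinSum, eisensteinSum, sum_filter, sum_filter, mul_sum]
  refine (Fintype.sum_equiv (Equiv.mulLeft₀ _ hc) _ _ fun y => ?_).symm
  simp [htrace]

lemma eisensteinSum_eq_of_ne_zero (hχF : ∀ c : Fˣ, χ (algebraMap F K c) = 1) {t : F}
    (ht : t ≠ 0) : eisensteinSum F χ t = eisensteinSum F χ 1 := by
  have h := eisensteinSum_mul χ (Units.mk0 t ht) 1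
  rwa [hχF, one_mul, Units.val_mk0, mul_one] at h

variable [Fintype F]

lemma sum_eisensteinSum [IsDomain R] (hχ : χ ≠ 1) : ∑ t : F, eisensteinSum F χ t = 0 := by
  simp only [eisensteinSum]
  rw [sum_fiberwise_of_maps_to (fun x _ => mem_univ (Algebra.trace F K x))]
  exact sum_eq_zero_of_ne_one hχ

lemma gaussSum_compAddMonoidHom_trace (ψ : AddChar F R) :
    gaussSum χ (ψ.compAddMonoidHom (Algebra.trace F K).toAddMonoidHom) =
      ∑ t, eisensteinSum F χ t * ψ t := by
  rw [gaussSum, ← sum_fiberwise_of_maps_to (fun x _ => mem_univ (Algebra.trace F K x))]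
  refine sum_congr rfl fun t _ => ?_
  rw [eisensteinSum, sum_mul]
  refine sum_congr rfl fun x hx => ?_
  rw [← (mem_filter.mp hx).2]
  rfl

lemma gaussSum_compAddMonoidHom_trace_eq_neg_card_mul [IsDomain R] (hχ : χ ≠ 1)
    (hχF : ∀ c : Fˣ, χ (algebraMap F K c) = 1) {ψ : AddChar F R} (hψ : ψ ≠ 1) :
    gaussSum χ (ψ.compAddMonoidHom (Algebra.trace F K).toAddMonoidHom) =
      -(Fintype.card F : R) * eisensteinSum F χ 1 := by
  calc _ = ∑ t, eisensteinSum F χ t * ψ t := gaussSum_compAddMonoidHom_trace χ ψ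
    _ = ∑ t, eisensteinSum F χ t * (ψ t - 1) := by
      simp [mul_sub, sum_sub_distrib, sum_eisensteinSum χ hχ]
    _ = ∑ t, eisensteinSum F χ 1 * (ψ t - 1) := by
      refine sum_congr rfl fun t _ => ?_
      rcases eq_or_ne t 0 with rfl | ht
      · simp
      · rw [eisensteinSum_eq_of_ne_zero χ hχF ht]
    _ = _ := by
      simp [← mul_sum, sum_sub_distrib, AddChar.sum_eq_zero_of_ne_one hψ, mul_comm]

lemma card_mul_norm_eisensteinSum_one {χ : MulChar K ℂ} (hχ : χ ≠ 1)
    (hχF : ∀ c : Fˣ, χ (algebraMap F K c) = 1) :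
    Fintype.card F * ‖eisensteinSum F χ 1‖ = √(Fintype.card K) := by
  obtain ⟨ψ, hψ1⟩ := AddChar.exists_apply_ne_zero.mpr (one_ne_zero : (1 : F) ≠ 0)
  have hψ : ψ ≠ 1 := AddChar.ne_one_iff.mpr ⟨1, hψ1⟩
  have h := norm_gaussSum_sq hχ
    (AddChar.IsPrimitive.of_ne_one (AddChar.compAddMonoidHom_trace_ne_one (K := K) hψ))
  rw [gaussSum_compAddMonoidHom_trace_eq_neg_card_mul χ hχ hχF hψ, norm_mul, norm_neg,
    Complex.norm_natCast] at h
  rw [← h, Real.sqrt_sq (by positivity)]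

end MulChar

open MulChar in
theorem abs_eisenstein_of_trivial_on_base
    (F K : Type*) [Field F] [Field K] [Fintype F] [Fintype K] [DecidableEq F] [DecidableEq K]
    [Algebra F K] (q n : ℕ) (hq : Fintype.card F = q) (hn : Module.finrank F K = n)
    (χ : Kˣ →* ℂ) (hχ : χ ≠ 1)
    (hres : ∀ u : Fˣ, χ (Units.map (algebraMap F K : F →+* K).toMonoidHom u) = 1) :
    ‖(∑ s ∈ Finset.univ.filter (fun s : Kˣ => Algebra.trace F K (s : K) = 1), χ s)‖ =
      (q : ℝ) ^ ((n : ℝ) / 2 - 1) := by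
  set χ' : MulChar K ℂ := ofUnitHom χ.toHomUnits
  have hχ'_units (u : Kˣ) : χ' u = χ u := by simp [χ']
  have hχ' : χ' ≠ 1 := fun h => hχ <| MonoidHom.ext fun u => by simp [← hχ'_units, h]
  have hχ'F (c : Fˣ) : χ' (algebraMap F K c) = 1 := (hχ'_units (Units.map _ c)).trans (hres c)
  have h := card_mul_norm_eisensteinSum_one hχ' hχ'F
  rw [Module.card_eq_pow_finrank (K := F) (V := K), hq, hn] at h
  simp_rw [← hχ'_units]
  have hq0 : (0 : ℝ) < q := by rw [← hq]; exact_mod_cast Fintype.card_pos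
  rw [sum_units_eq_eisensteinSum, Real.rpow_sub hq0, Real.rpow_one, eq_div_iff hq0.ne',
    mul_comm, h, Nat.cast_pow, Real.sqrt_eq_rpow, ← Real.rpow_natCast, ← Real.rpow_mul hq0.le]
  ring_nf
end

section
/- Let R be a finite local ring with maximal ideal m and residue field F = R/m, and let S = R[X]/(f) where f ∈ R[X] is a monic lift of an irreducible polynomial over F of degree n. Then the trace map Tr : S → R (trace of the multiplication-by-s matrix with respect to the basis 1, ξ, …, ξ^{n-1}) is surjective. -/
/-!
Reduction modulo `m` maps `S` onto the field `T = F[X]/(f̄)` and carries the basis `ξ^i` to the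
basis `ξ̄^i`, so it turns the trace of `S/R` into the trace of `T/F`. The latter is surjective
because finite fields are perfect, so some `s` has a trace that is a unit of `R`, and an
`R`-linear form taking a unit value is onto.
-/

open Polynomial

section RingHomCompatibleBases

variable {R S F T ι : Type*} [CommRing R] [CommRing S] [CommRing F] [CommRing T]
  [Algebra R S] [Algebra F T] [Fintype ι]
  {π : R →+* F} {φ : S →+* T} {b : Module.Basis ι R S} {b' : Module.Basis ι F T}

theorem Module.Basis.repr_ringHom_apply
    (hφ : φ.comp (algebraMap R S) = (algebraMap F T).comp π) (hb : ∀ i, φ (b i) = b' i)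
    (x : S) (i : ι) :
    b'.repr (φ x) i = π (b.repr x i) := by
  have hx : φ x = ∑ j, π (b.repr x j) • b' j := by
    conv_lhs => rw [← b.sum_repr x]
    simp only [map_sum, Algebra.smul_def, map_mul, ← hb, ← RingHom.comp_apply, hφ]
  rw [hx, b'.repr_sum_self]

theorem Algebra.leftMulMatrix_ringHom [DecidableEq ι]
    (hφ : φ.comp (algebraMap R S) = (algebraMap F T).comp π) (hb : ∀ i, φ (b i) = b' i) (s : S) :
    Algebra.leftMulMatrix b' (φ s) = (Algebra.leftMulMatrix b s).map π := by
  ext i j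
  rw [Matrix.map_apply, Algebra.leftMulMatrix_eq_repr_mul, Algebra.leftMulMatrix_eq_repr_mul,
    ← hb, ← map_mul, Module.Basis.repr_ringHom_apply hφ hb]

theorem Algebra.map_trace_of_basis
    (hφ : φ.comp (algebraMap R S) = (algebraMap F T).comp π) (hb : ∀ i, φ (b i) = b' i) (s : S) :
    π (Algebra.trace R S s) = Algebra.trace F T (φ s) := by
  classical
  rw [Algebra.trace_eq_matrix_trace b, Algebra.trace_eq_matrix_trace b',
    Algebra.leftMulMatrix_ringHom hφ hb, AddMonoidHom.map_trace]

end RingHomCompatibleBases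

namespace AdjoinRoot

variable {R S : Type*} [CommRing R] [CommRing S]

theorem map_surjective {f : R →+* S} (hf : Function.Surjective f) (p : R[X]) (q : S[X])
    (h : q ∣ p.map f) : Function.Surjective (map f p q h) := by
  intro y
  induction y using AdjoinRoot.induction_on with
  | ih g =>
    obtain ⟨g', rfl⟩ := Polynomial.map_surjective f hf g
    refine ⟨mk p g', ?_⟩
    simp [map, ← Polynomial.eval₂_map, ← AdjoinRoot.algebraMap_eq, ← Polynomial.aeval_def]

theorem map_trace [Nontrivial S] (f : R →+* S) {p : R[X]} (hp : p.Monic) (x : AdjoinRoot p) :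
    f (Algebra.trace R (AdjoinRoot p) x) =
      Algebra.trace S (AdjoinRoot (p.map f)) (map f p (p.map f) dvd_rfl x) := by
  refine Algebra.map_trace_of_basis (b := (powerBasis' hp).basis)
    (b' := (powerBasis' (hp.map f)).basis.reindex (finCongr (hp.natDegree_map f))) ?_ ?_ x
  · ext r; simp [AdjoinRoot.algebraMap_eq]
  · intro i
    simp only [PowerBasis.coe_basis, Module.Basis.coe_reindex, Function.comp_apply,
      powerBasis'_gen, map_pow, map_root]
    rfl

end AdjoinRoot

theorem LinearMap.surjective_of_isUnit_apply {R M : Type*} [CommRing R] [AddCommGroup M]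
    [Module R M] (l : M →ₗ[R] R) {x : M} (hx : IsUnit (l x)) : Function.Surjective l := by
  obtain ⟨u, hu⟩ := hx
  intro r
  exact ⟨(r * ↑u⁻¹) • x, by rw [map_smul, smul_eq_mul, ← hu, mul_assoc, Units.inv_mul, mul_one]⟩

theorem trace_surjective_of_standard_extension
    (R : Type*) [CommRing R] [Fintype R] [IsLocalRing R]
    (f : Polynomial R) (hf : f.Monic)
    (hirr : Irreducible
      (f.map (Ideal.Quotient.mk (IsLocalRing.maximalIdeal R)))) :
    Function.Surjective (Algebra.trace R (AdjoinRoot f)) := by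
  set π := IsLocalRing.residue R
  have : Fact (Irreducible (f.map π)) := ⟨hirr⟩
  have : Finite (IsLocalRing.ResidueField R) := .of_surjective π IsLocalRing.residue_surjective
  have : Module.Finite (IsLocalRing.ResidueField R) (AdjoinRoot (f.map π)) :=
    (AdjoinRoot.powerBasis' (hf.map π)).finite
  obtain ⟨t, ht⟩ := Algebra.trace_surjective (IsLocalRing.ResidueField R) (AdjoinRoot (f.map π)) 1
  obtain ⟨s, rfl⟩ := AdjoinRoot.map_surjective IsLocalRing.residue_surjective f _ dvd_rfl t
  refine LinearMap.surjective_of_isUnit_apply _ (x := s) ?_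
  rw [← IsLocalRing.residue_ne_zero_iff_isUnit, AdjoinRoot.map_trace π hf, ht]
  exact one_ne_zero
end

section
/- Let R ⊆ S be a standard unramified extension of finite valuation rings with trace map Tr : S → R. If t ∈ S satisfies Tr(ts) = 0 for all s ∈ S, then t = 0. -/
/-!
Reducing modulo the maximal ideal `m` of `R` turns the discriminant of `S = R[X]/(f)` into the
discriminant of the residue extension `S/mS = (R/m)[X]/(f mod m)`, a finite extension of finite
fields. Finite fields are perfect, so that extension is separable and its discriminant is nonzero.
Hence the discriminant over `R` is a unit, i.e. the trace form of `S/R` is nondegenerate.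
-/

attribute [local instance] Ideal.Quotient.field

open Algebra Module Matrix

namespace Algebra

variable {A B ι : Type*} [CommRing A] [CommRing B] [Algebra A B] [Fintype ι] [DecidableEq ι]

theorem traceForm_separatingLeft_of_isUnit_discr (b : Basis ι A B) (hb : IsUnit (discr A b)) :
    (traceForm A B).SeparatingLeft := by
  intro t ht
  have hvec : traceMatrix A b *ᵥ b.equivFun t = 0 := by
    rw [traceMatrix_of_basis_mulVec]
    funext i
    simpa using ht (b i)
  have : b.equivFun t = 0 :=
    mulVec_injective_of_isUnit ((isUnit_iff_isUnit_det _).mpr hb)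
      (hvec.trans (mulVec_zero _).symm)
  simpa using this

end Algebra

namespace IsLocalRing

variable {R S ι : Type*} [CommRing R] [IsLocalRing R] [CommRing S] [Algebra R S]
  [Module.Free R S] [Module.Finite R S] [Fintype ι] [DecidableEq ι]

theorem discr_basisQuotient (b : Basis ι R S) :
    discr (R ⧸ maximalIdeal R) (basisQuotient b) = Ideal.Quotient.mk _ (discr R b) := by
  rw [discr_def, discr_def, RingHom.map_det]
  congr 1
  ext i j
  simp only [RingHom.mapMatrix_apply, map_apply, traceMatrix_apply, traceForm_apply,
    basisQuotient_apply, ← map_mul, Algebra.trace_quotient_mk]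

theorem isUnit_discr_of_isUnit_discr_basisQuotient (b : Basis ι R S)
    (h : IsUnit (discr (R ⧸ maximalIdeal R) (basisQuotient b))) : IsUnit (discr R b) := by
  rw [discr_basisQuotient] at h
  exact (isUnit_map_iff (residue R) _).mp h

end IsLocalRing

theorem AdjoinRoot.isField_quotient_map_of_irreducible {R : Type*} [CommRing R] {f : Polynomial R}
    {I : Ideal R} [I.IsMaximal] (hirr : Irreducible (f.map (Ideal.Quotient.mk I))) :
    IsField (AdjoinRoot f ⧸ I.map (algebraMap R (AdjoinRoot f))) :=
  have : Fact (Irreducible (f.map (Ideal.Quotient.mk I))) := ⟨hirr⟩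
  MulEquiv.isField (Field.toIsField (AdjoinRoot (f.map (Ideal.Quotient.mk I))))
    (AdjoinRoot.quotEquivQuotMap f I).toMulEquiv

theorem trace_nondegenerate_of_standard_extension_general
    (R : Type*) [CommRing R] [Fintype R] [IsLocalRing R]
    (f : Polynomial R) (hf : f.Monic)
    (hirr : Irreducible
      (f.map (Ideal.Quotient.mk (IsLocalRing.maximalIdeal R))))
    (t : AdjoinRoot f)
    (ht : ∀ s : AdjoinRoot f, Algebra.trace R (AdjoinRoot f) (t * s) = 0) :
    t = 0 := by
  let b := (AdjoinRoot.powerBasis' hf).basis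
  have : Module.Free R (AdjoinRoot f) := .of_basis b
  have : Module.Finite R (AdjoinRoot f) := .of_basis b
  let := (AdjoinRoot.isField_quotient_map_of_irreducible hirr).toField
  have hres := discr_isUnit_of_basis _ (IsLocalRing.basisQuotient b)
  exact traceForm_separatingLeft_of_isUnit_discr b
    (IsLocalRing.isUnit_discr_of_isUnit_discr_basisQuotient b hres) t ht

theorem trace_nondegenerate_of_standard_extension
    (R : Type*) [CommRing R] [Fintype R] [IsLocalRing R] [IsPrincipalIdealRing R]
    (π : R) (hπ : IsLocalRing.maximalIdeal R = Ideal.span {π})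
    (f : Polynomial R) (hf : f.Monic)
    (hirr : Irreducible
      (f.map (Ideal.Quotient.mk (IsLocalRing.maximalIdeal R))))
    (t : AdjoinRoot f)
    (ht : ∀ s : AdjoinRoot f, Algebra.trace R (AdjoinRoot f) (t * s) = 0) :
    t = 0 :=
  trace_nondegenerate_of_standard_extension_general R f hf hirr t ht
end

section
/- Let R be a finite valuation ring with parameters q and ℓ, and let ψ be a nontrivial additive character of R and χ a nontrivial multiplicative character of R^×. If ψ and χ have the same valuation k (k smallest with ψ trivial on (π^k), respectively χ trivial on 1+(π^k)), then the Gauss sum G(ψ,χ) = Σ_{u ∈ R^×} ψ(u)χ(u) has absolute value q^{ℓ - k/2}. -/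
/-!
Expanding `G * conj G` for `G = ∑ u, ψ u * χ u` and substituting `u = t * v` gives
`∑ t, χ t * ∑ v ∈ Rˣ, ψ ((t - 1) * v)`. The units are `R` minus the maximal ideal `𝔪 = (π)`, so by
orthogonality of `ψ` the inner sum is `|R| [t - 1 ∈ (π ^ k)] - |𝔪| [ψ ((t - 1) 𝔪) = 1]`. The
second condition cuts out a subgroup of `Rˣ` containing `1 + (π ^ (k - 1))`, on which `χ` is
nontrivial, so it contributes nothing, and `|G| ^ 2 = |R| |1 + (π ^ k)| = q ^ ℓ q ^ (ℓ - k)`.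
-/

open Finset ComplexConjugate IsLocalRing

open Classical in
theorem AddChar.sum_addSubgroup_eq_ite {G K : Type*} [AddCommGroup G] [CommRing K] [IsDomain K]
    (ψ : AddChar G K) (H : AddSubgroup G) [Fintype H] :
    ∑ x : H, ψ x = if ∀ x ∈ H, ψ x = 1 then (Nat.card H : K) else 0 := by
  have key : ψ.compAddMonoidHom H.subtype = 0 ↔ ∀ x ∈ H, ψ x = 1 := by
    simp [AddChar.ext_iff]
  simpa [key, Nat.card_eq_fintype_card] using (ψ.compAddMonoidHom H.subtype).sum_eq_ite

namespace MonoidHom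
variable {G : Type*} [Group G]

theorem sum_subgroup_eq_card {K : Type*} [Semiring K] (χ : G →* K) (H : Subgroup G) [Fintype H]
    (h : ∀ t ∈ H, χ t = 1) : ∑ t : H, χ t = Nat.card H := by
  simp [sum_congr rfl fun (t : H) _ => h t t.2, Nat.card_eq_fintype_card]

theorem sum_subgroup_eq_zero {K : Type*} [CommRing K] [IsDomain K] (χ : G →* K) (H : Subgroup G)
    [Fintype H] (h : ∃ t ∈ H, χ t ≠ 1) : ∑ t : H, χ t = 0 := by
  obtain ⟨t, ht, hχt⟩ := h
  refine sum_hom_units_eq_zero (χ.comp H.subtype) fun h1 => hχt ?_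
  simpa using DFunLike.congr_fun h1 ⟨t, ht⟩

theorem map_inv_eq_conj [Finite G] (χ : G →* ℂ) (g : G) : χ g⁻¹ = conj (χ g) := by
  have hnorm : ‖χ g‖ = 1 := Complex.norm_eq_one_of_pow_eq_one
    (by rw [← map_pow, pow_card_eq_one', map_one]) Nat.card_pos.ne'
  rw [← Complex.inv_eq_conj hnorm]
  exact eq_inv_of_mul_eq_one_left (by rw [← map_mul, inv_mul_cancel, map_one])

end MonoidHom

namespace AddChar
variable {R M : Type*} [CommRing R] [Monoid M]

def orthogonalIdeal (ψ : AddChar R M) (I : Ideal R) : Ideal R where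
  carrier := {a | ∀ x ∈ I, ψ (a * x) = 1}
  zero_mem' x _ := by rw [zero_mul, map_zero_eq_one]
  add_mem' {a b} ha hb x hx := by rw [add_mul, map_add_eq_mul, ha x hx, hb x hx, one_mul]
  smul_mem' c a ha x hx := by
    rw [smul_eq_mul, mul_assoc, mul_left_comm]
    exact ha _ (I.mul_mem_left c hx)

theorem mem_orthogonalIdeal {ψ : AddChar R M} {I : Ideal R} {a : R} :
    a ∈ ψ.orthogonalIdeal I ↔ ∀ x ∈ I, ψ (a * x) = 1 := Iff.rfl

open Classical in
theorem sum_ideal_mul_eq_ite {K : Type*} [CommRing K] [IsDomain K] (ψ : AddChar R K)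
    (I : Ideal R) [Fintype I] (a : R) :
    ∑ x : I, ψ (a * x) = if a ∈ ψ.orthogonalIdeal I then (Nat.card I : K) else 0 :=
  (ψ.mulShift a).sum_addSubgroup_eq_ite I.toAddSubgroup

open Classical in
theorem sum_mul_eq_ite {K : Type*} [CommRing K] [IsDomain K] [Fintype R] (ψ : AddChar R K)
    (a : R) : ∑ x, ψ (a * x) = if a ∈ ψ.orthogonalIdeal ⊤ then (Nat.card R : K) else 0 := by
  have key : ψ.mulShift a = 0 ↔ a ∈ ψ.orthogonalIdeal ⊤ := by
    simp [AddChar.ext_iff, mem_orthogonalIdeal]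
  simpa [key, Nat.card_eq_fintype_card] using (ψ.mulShift a).sum_eq_ite

end AddChar

def Ideal.unitsCongrSubgroup {R : Type*} [CommRing R] (J : Ideal R) : Subgroup Rˣ :=
  (Units.map (Ideal.Quotient.mk J : R →* R ⧸ J)).ker

namespace Ideal
variable {R : Type*} [CommRing R]

theorem mem_unitsCongrSubgroup {J : Ideal R} {u : Rˣ} :
    u ∈ J.unitsCongrSubgroup ↔ (u : R) - 1 ∈ J := by
  rw [unitsCongrSubgroup, MonoidHom.mem_ker, Units.ext_iff, Units.coe_map, Units.val_one,
    ← map_one (Ideal.Quotient.mk J)]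
  exact Ideal.Quotient.eq

theorem card_unitsCongrSubgroup [IsLocalRing R] {J : Ideal R} (hJ : J ≤ maximalIdeal R) :
    Nat.card J.unitsCongrSubgroup = Nat.card J := by
  refine Nat.card_eq_of_bijective (fun u => ⟨((u : Rˣ) : R) - 1, mem_unitsCongrSubgroup.mp u.2⟩)
    ⟨fun u v huv => ?_, fun x => ?_⟩
  · exact Subtype.ext (Units.ext (sub_left_injective (congrArg Subtype.val huv)))
  · have hunit : IsUnit (1 + (x : R)) := by
      simpa using isUnit_one_sub_self_of_mem_nonunits (-x : R) (neg_mem (hJ x.2))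
    exact ⟨⟨hunit.unit, mem_unitsCongrSubgroup.mpr (by simp)⟩, by ext; simp⟩

open Classical in
theorem sum_units_mul_ite_sub_one_mem {M : Type*} [CommSemiring M] [Fintype R] [DecidableEq R]
    (J : Ideal R) (f : Rˣ → M) (c : M) :
    ∑ t : Rˣ, f t * (if (t : R) - 1 ∈ J then c else 0) =
      c * ∑ t : J.unitsCongrSubgroup, f t := by
  simp_rw [mul_ite, mul_zero]
  rw [← sum_filter, ← sum_mul, mul_comm,
    sum_subtype (p := (· ∈ J.unitsCongrSubgroup)) _ fun t => by simp [mem_unitsCongrSubgroup]]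

end Ideal

theorem IsLocalRing.sum_units_eq_sub {R M : Type*} [CommRing R] [IsLocalRing R] [Fintype R]
    [DecidableEq R] [Fintype (maximalIdeal R)] [AddCommGroup M] (f : R → M) :
    ∑ u : Rˣ, f u = ∑ x, f x - ∑ x : maximalIdeal R, f x := by
  classical
  rw [eq_sub_iff_add_eq, add_comm]
  convert Fintype.sum_subtype_add_sum_subtype (· ∈ maximalIdeal R) f using 2
  · congr
    exact Subsingleton.elim _ _
  refine Fintype.sum_bijective
    (fun u : Rˣ => (⟨u, notMem_maximalIdeal.mpr u.isUnit⟩ : {x // x ∉ maximalIdeal R}))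
    ⟨fun u v h => Units.ext (congrArg Subtype.val h), fun x => ?_⟩ _ _ fun _ => rfl
  exact ⟨(notMem_maximalIdeal.mp x.2).unit, rfl⟩

def unitsGaussSum {R : Type*} [CommRing R] [Fintype R] [DecidableEq R] (ψ : AddChar R ℂ)
    (χ : Rˣ →* ℂ) : ℂ :=
  ∑ u : Rˣ, ψ u * χ u

theorem unitsGaussSum_mul_conj {R : Type*} [CommRing R] [Fintype R] [DecidableEq R]
    (ψ : AddChar R ℂ) (χ : Rˣ →* ℂ) :
    unitsGaussSum ψ χ * conj (unitsGaussSum ψ χ) =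
      ∑ t : Rˣ, χ t * ∑ v : Rˣ, ψ ((t - 1) * v) := by
  have hterm (t v : Rˣ) :
      χ t * ψ ((t - 1) * v) = ψ ↑(t * v) * χ (t * v) * conj (ψ v * χ v) := by
    rw [map_mul (starRingEnd ℂ), ← ψ.map_neg_eq_conj, ← χ.map_inv_eq_conj, mul_mul_mul_comm,
      ← ψ.map_add_eq_mul, ← map_mul, mul_inv_cancel_right, Units.val_mul, mul_comm]
    congr 2
    ring
  calc _ = ∑ v : Rˣ, ∑ u : Rˣ, ψ u * χ u * conj (ψ v * χ v) := by
        rw [unitsGaussSum, map_sum, sum_mul_sum, sum_comm]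
    _ = ∑ v : Rˣ, ∑ t : Rˣ, χ t * ψ ((t - 1) * v) :=
        sum_congr rfl fun v _ => (Fintype.sum_equiv (Equiv.mulRight v) _ _ (hterm · v)).symm
    _ = _ := by simp_rw [mul_sum]; exact sum_comm

open Classical in
theorem IsLocalRing.unitsGaussSum_mul_conj {R : Type*} [CommRing R] [IsLocalRing R]
    [Fintype R] [DecidableEq R] (ψ : AddChar R ℂ) (χ : Rˣ →* ℂ) :
    unitsGaussSum ψ χ * conj (unitsGaussSum ψ χ) =
      Nat.card R * ∑ t : (ψ.orthogonalIdeal ⊤).unitsCongrSubgroup, χ t -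
        Nat.card (maximalIdeal R) *
          ∑ t : (ψ.orthogonalIdeal (maximalIdeal R)).unitsCongrSubgroup, χ t := by
  rw [_root_.unitsGaussSum_mul_conj, ← Ideal.sum_units_mul_ite_sub_one_mem,
    ← Ideal.sum_units_mul_ite_sub_one_mem, ← sum_sub_distrib]
  refine sum_congr rfl fun t _ => ?_
  rw [sum_units_eq_sub (fun x => ψ ((t - 1) * x)), AddChar.sum_mul_eq_ite,
    AddChar.sum_ideal_mul_eq_ite, mul_sub]

theorem Submodule.card_eq_card_map_mul_card_ker {R M N : Type*} [Ring R] [AddCommGroup M]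
    [AddCommGroup N] [Module R M] [Module R N] (f : M →ₗ[R] N) {S : Submodule R M}
    (h : LinearMap.ker f ≤ S) :
    Nat.card S = Nat.card (S.map f) * Nat.card (LinearMap.ker f) := by
  rw [Submodule.card_eq_card_quotient_mul_card (LinearMap.ker (f.domRestrict S)), mul_comm,
    Nat.card_congr (f.domRestrict S).quotKerEquivRange.toEquiv, LinearMap.range_domRestrict,
    LinearMap.ker_domRestrict, Nat.card_congr (Submodule.comapSubtypeEquivOfLe h).toEquiv]

namespace IsLocalRing
variable {R : Type*} [CommRing R] [IsLocalRing R] {π : R}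

theorem exists_eq_pow_mul_unit (hπ : maximalIdeal R = Ideal.span {π}) (hnil : IsNilpotent π)
    (x : R) : ∃ (m : ℕ) (u : Rˣ), x = π ^ m * u := by
  classical
  obtain ⟨ℓ, hℓ⟩ := hnil
  by_cases hx : x = 0
  · exact ⟨ℓ, 1, by simp [hx, hℓ]⟩
  have hex : ∃ n, ¬ π ^ n ∣ x := ⟨ℓ, by rwa [hℓ, zero_dvd_iff]⟩
  obtain ⟨m, hm⟩ : ∃ m, Nat.find hex = m + 1 :=
    Nat.exists_eq_succ_of_ne_zero fun h => Nat.find_spec hex (by rw [h, pow_zero]; exact one_dvd x)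
  obtain ⟨c, rfl⟩ : π ^ m ∣ x := not_not.mp (Nat.find_min hex (by omega))
  have hc : IsUnit c := by
    by_contra hc
    obtain ⟨d, rfl⟩ := Ideal.mem_span_singleton.mp (hπ ▸ (mem_maximalIdeal c).mpr hc)
    exact Nat.find_spec hex (hm ▸ ⟨d, by ring⟩)
  exact ⟨m, hc.unit, rfl⟩

theorem card_span_pow_eq_card_residueField_mul [Finite R]
    (hπ : maximalIdeal R = Ideal.span {π}) {j : ℕ} (hj : π ^ j ≠ 0) :
    Nat.card (Ideal.span {π ^ j}) =
      Nat.card (ResidueField R) * Nat.card (Ideal.span {π ^ (j + 1)}) := by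
  let f := LinearMap.mulLeft R (π ^ j)
  have hmap (y : R) : Submodule.map f (Ideal.span {y}) = Ideal.span {π ^ j * y} := by
    rw [Ideal.span, Submodule.map_span, Set.image_singleton]
    rfl
  have hker : LinearMap.ker f ≤ maximalIdeal R := fun x hx => by
    by_contra hx'
    exact hj ((notMem_maximalIdeal.mp hx').mul_left_eq_zero.mp hx)
  have hR : Nat.card R = Nat.card (Ideal.span {π ^ j}) * Nat.card (LinearMap.ker f) := by
    rw [← Nat.card_congr (Submodule.topEquiv (R := R) (M := R)).toEquiv,
      Submodule.card_eq_card_map_mul_card_ker f (hker.trans le_top), ← Ideal.span_singleton_one,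
      hmap, mul_one]
  have hm : Nat.card (maximalIdeal R) =
      Nat.card (Ideal.span {π ^ (j + 1)}) * Nat.card (LinearMap.ker f) := by
    rw [Submodule.card_eq_card_map_mul_card_ker f hker, hπ, hmap, ← pow_succ]
  have hquot : Nat.card R = Nat.card (maximalIdeal R) * Nat.card (ResidueField R) :=
    Submodule.card_eq_card_quotient_mul_card (maximalIdeal R)
  exact Nat.eq_of_mul_eq_mul_right Nat.card_pos (by rw [← hR, hquot, hm]; ring)

theorem card_span_pow [Finite R] (hπ : maximalIdeal R = Ideal.span {π}) {ℓ : ℕ}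
    (hnil : π ^ ℓ = 0) (hne : ∀ m < ℓ, π ^ m ≠ 0) {j : ℕ} (hj : j ≤ ℓ) :
    Nat.card (Ideal.span {π ^ j}) = Nat.card (ResidueField R) ^ (ℓ - j) := by
  obtain ⟨n, hn, rfl⟩ : ∃ n ≤ ℓ, j = ℓ - n := ⟨ℓ - j, by omega, by omega⟩
  clear hj
  rw [Nat.sub_sub_self hn]
  induction n with
  | zero => simp [hnil]
  | succ n ih =>
    rw [card_span_pow_eq_card_residueField_mul hπ (hne _ (by omega)),
      show ℓ - (n + 1) + 1 = ℓ - n by omega, ih (by omega), pow_succ']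

theorem card_eq_card_residueField_pow [Finite R] (hπ : maximalIdeal R = Ideal.span {π})
    {ℓ : ℕ} (hnil : π ^ ℓ = 0) (hne : ∀ m < ℓ, π ^ m ≠ 0) :
    Nat.card R = Nat.card (ResidueField R) ^ ℓ := by
  rw [← Nat.card_congr (Submodule.topEquiv (R := R) (M := R)).toEquiv,
    ← Ideal.span_singleton_one, ← pow_zero π, card_span_pow hπ hnil hne ℓ.zero_le, Nat.sub_zero]

end IsLocalRing

namespace AddChar
variable {R M : Type*} [CommRing R] [IsLocalRing R] [Monoid M] {π : R} (ψ : AddChar R M) {k : ℕ}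

theorem orthogonalIdeal_top_eq_span_pow (hπ : maximalIdeal R = Ideal.span {π})
    (hnil : IsNilpotent π) (htriv : ∀ x ∈ Ideal.span {π ^ k}, ψ x = 1)
    (hmin : ∀ j < k, ∃ x ∈ Ideal.span {π ^ j}, ψ x ≠ 1) :
    ψ.orthogonalIdeal ⊤ = Ideal.span {π ^ k} := by
  ext a
  refine ⟨fun ha => ?_, fun ha x _ => htriv _ (Ideal.mul_mem_right x _ ha)⟩
  obtain ⟨m, u, rfl⟩ := exists_eq_pow_mul_unit hπ hnil a
  by_cases hkm : k ≤ m
  · exact Ideal.mul_mem_right _ _ (Ideal.mem_span_singleton.mpr (pow_dvd_pow π hkm))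
  obtain ⟨x, hx, hψx⟩ := hmin m (by omega)
  obtain ⟨c, rfl⟩ := Ideal.mem_span_singleton.mp hx
  refine absurd (ha (↑u⁻¹ * c) Submodule.mem_top) ?_
  rwa [mul_assoc, Units.mul_inv_cancel_left]

theorem span_pow_pred_le_orthogonalIdeal_maximalIdeal (hπ : maximalIdeal R = Ideal.span {π})
    (htriv : ∀ x ∈ Ideal.span {π ^ k}, ψ x = 1) :
    Ideal.span {π ^ (k - 1)} ≤ ψ.orthogonalIdeal (maximalIdeal R) := fun a ha x hx => by
  have hk : k ≤ k - 1 + 1 := by omega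
  refine htriv _ (Ideal.span_singleton_le_span_singleton.mpr (pow_dvd_pow π hk) ?_)
  rw [pow_succ, ← Ideal.span_singleton_mul_span_singleton]
  exact Ideal.mul_mem_mul ha (hπ ▸ hx)

end AddChar

theorem Complex.norm_eq_rpow_of_mul_conj_eq {z : ℂ} {q ℓ k : ℕ} (hq : 0 < q) (hk : k ≤ ℓ)
    (h : z * conj z = q ^ ℓ * q ^ (ℓ - k)) : ‖z‖ = (q : ℝ) ^ ((ℓ : ℝ) - k / 2) := by
  have hz : ‖z‖ ^ 2 = (q : ℝ) ^ ℓ * (q : ℝ) ^ (ℓ - k) := by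
    rw [← Complex.ofReal_inj, Complex.sq_norm, ← Complex.mul_conj, h]
    norm_cast
  have hrhs : ((q : ℝ) ^ ((ℓ : ℝ) - k / 2)) ^ 2 = (q : ℝ) ^ ℓ * (q : ℝ) ^ (ℓ - k) := by
    rw [← Real.rpow_mul_natCast (by positivity), ← Real.rpow_natCast, ← Real.rpow_natCast,
      ← Real.rpow_add (by exact_mod_cast hq), Nat.cast_sub hk]
    ring_nf
  exact (pow_left_inj₀ (norm_nonneg z) (by positivity) two_ne_zero).mp (hz.trans hrhs.symm)

theorem abs_gauss_sum_finite_valuation_ring_general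
    (R : Type*) [CommRing R] [Fintype R] [DecidableEq R] [IsLocalRing R]
    (π : R) (hπ : IsLocalRing.maximalIdeal R = Ideal.span {π})
    (q ℓ : ℕ) (hq : Nat.card (IsLocalRing.ResidueField R) = q)
    (hnil : π ^ ℓ = 0) (hmin : ∀ m, 0 < m → m < ℓ → π ^ m ≠ 0)
    (ψ : AddChar R ℂ) (χ : Rˣ →* ℂ) (hψ : ψ ≠ 1) (k : ℕ)
    (hψtriv : ∀ x ∈ Ideal.span {π ^ k}, ψ x = 1)
    (hψmin : ∀ j < k, ∃ x ∈ Ideal.span {π ^ j}, ψ x ≠ 1)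
    (hχtriv : ∀ u : Rˣ, (u : R) - 1 ∈ Ideal.span {π ^ k} → χ u = 1)
    (hχmin : ∀ j < k, ∃ u : Rˣ, (u : R) - 1 ∈ Ideal.span {π ^ j} ∧ χ u ≠ 1) :
    ‖∑ u : Rˣ, ψ (u : R) * χ u‖ = (q : ℝ) ^ ((ℓ : ℝ) - (k : ℝ) / 2) := by
  classical
  have hk0 : k ≠ 0 := by
    rintro rfl
    exact hψ (AddChar.ext _ _ fun x => by simpa using hψtriv x)
  have hkℓ : k ≤ ℓ := by
    by_contra! h
    obtain ⟨x, hx, hψx⟩ := hψmin ℓ h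
    rw [hnil, Ideal.span_singleton_eq_bot.mpr rfl, Ideal.mem_bot] at hx
    exact hψx (hx ▸ ψ.map_zero_eq_one)
  have hne : ∀ m < ℓ, π ^ m ≠ 0 := fun m hm =>
    m.eq_zero_or_pos.elim (fun h => by simp [h]) (hmin m · hm)
  have horth := ψ.orthogonalIdeal_top_eq_span_pow hπ ⟨ℓ, hnil⟩ hψtriv hψmin
  have hmax : ψ.orthogonalIdeal ⊤ ≤ maximalIdeal R :=
    horth ▸ hπ ▸ Ideal.span_singleton_le_span_singleton.mpr (dvd_pow_self π hk0)
  obtain ⟨u, hu, hχu⟩ := hχmin (k - 1) (by omega)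
  have hu_mem := Ideal.mem_unitsCongrSubgroup.mpr
    (ψ.span_pow_pred_le_orthogonalIdeal_maximalIdeal hπ hψtriv hu)
  refine Complex.norm_eq_rpow_of_mul_conj_eq (hq ▸ Nat.card_pos (α := R ⧸ maximalIdeal R)) hkℓ ?_
  rw [← unitsGaussSum, IsLocalRing.unitsGaussSum_mul_conj,
    χ.sum_subgroup_eq_card _ fun t ht => hχtriv t (horth ▸ Ideal.mem_unitsCongrSubgroup.mp ht),
    χ.sum_subgroup_eq_zero _ ⟨u, hu_mem, hχu⟩, Ideal.card_unitsCongrSubgroup hmax, horth,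
    card_span_pow hπ hnil hne hkℓ, card_eq_card_residueField_pow hπ hnil hne, hq]
  push_cast
  ring

theorem abs_gauss_sum_finite_valuation_ring
    (R : Type*) [CommRing R] [Fintype R] [DecidableEq R] [IsLocalRing R]
    [IsPrincipalIdealRing R]
    (π : R) (hπ : IsLocalRing.maximalIdeal R = Ideal.span {π})
    (q ℓ : ℕ) (hq : Nat.card (IsLocalRing.ResidueField R) = q) (hqodd : Odd q)
    (hℓpos : 0 < ℓ) (hnil : π ^ ℓ = 0) (hmin : ∀ m, 0 < m → m < ℓ → π ^ m ≠ 0)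
    (ψ : AddChar R ℂ) (χ : Rˣ →* ℂ) (hψ : ψ ≠ 1) (hχ : χ ≠ 1) (k : ℕ)
    (hψtriv : ∀ x ∈ Ideal.span {π ^ k}, ψ x = 1)
    (hψmin : ∀ j < k, ∃ x ∈ Ideal.span {π ^ j}, ψ x ≠ 1)
    (hχtriv : ∀ u : Rˣ, (u : R) - 1 ∈ Ideal.span {π ^ k} → χ u = 1)
    (hχmin : ∀ j < k, ∃ u : Rˣ, (u : R) - 1 ∈ Ideal.span {π ^ j} ∧ χ u ≠ 1) :
    ‖∑ u : Rˣ, ψ (u : R) * χ u‖ = (q : ℝ) ^ ((ℓ : ℝ) - (k : ℝ) / 2) :=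
  abs_gauss_sum_finite_valuation_ring_general R π hπ q ℓ hq hnil hmin ψ χ hψ k hψtriv hψmin hχtriv
    hχmin
end

section
/- Let R be a finite valuation ring and let ψ be a nontrivial additive character of R and χ a nontrivial multiplicative character of R^×. If the valuations of ψ and χ differ, then the Gauss sum G(ψ,χ) = Σ_{u ∈ R^×} ψ(u)χ(u) equals 0. -/
/-!
Substituting `u ↦ u t` for a unit `t` gives `G = χ t * ∑ u, ψ (u t) χ u`. If `ψ` has the smaller
valuation `k`, a unit `t ≡ 1 mod π^k` with `χ t ≠ 1` does not change `ψ (u t)`, so `G = χ t * G`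
and `G = 0`. If `χ` has the smaller valuation `j`, every `t = 1 + z` with
`z ∈ (π^(k-1)) ⊆ (π^j)` has `χ t = 1`; averaging over these `z` factors out, for each `u`, the
complete sum `∑_{z ∈ (π^(k-1))} ψ (u z)` of a character nontrivial on `(π^(k-1))`, which is zero.
-/

open Finset

section GaussSum

variable {R M : Type*} [CommRing R] [CommRing M] [Fintype Rˣ]

theorem sum_units_addChar_mul_monoidHom_eq_mul_sum_mul_right (ψ : AddChar R M) (χ : Rˣ →* M)
    (t : Rˣ) :
    ∑ u : Rˣ, ψ (u : R) * χ u = χ t * ∑ u : Rˣ, ψ ((u : R) * t) * χ u := by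
  rw [← Equiv.sum_comp (Equiv.mulRight t), mul_sum]
  refine sum_congr rfl fun u _ => ?_
  simp only [Equiv.coe_mulRight, Units.val_mul, map_mul]
  ring

theorem sum_units_addChar_mul_monoidHom_eq_zero_of_mul_invariant [IsDomain M]
    (ψ : AddChar R M) (χ : Rˣ →* M) {t : Rˣ} (hχt : χ t ≠ 1)
    (hψt : ∀ x : R, ψ (x * t) = ψ x) :
    ∑ u : Rˣ, ψ (u : R) * χ u = 0 := by
  refine eq_zero_of_mul_eq_self_left hχt ?_
  conv_rhs => rw [sum_units_addChar_mul_monoidHom_eq_mul_sum_mul_right ψ χ t]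
  simp only [hψt]

omit [Fintype Rˣ] in
theorem AddChar.sum_mem_ideal_eq_zero [IsDomain M] (ψ : AddChar R M) {I : Ideal R} [Fintype I]
    (hψI : ∃ x ∈ I, ψ x ≠ 1) :
    ∑ z : I, ψ (z : R) = 0 := by
  obtain ⟨x, hxI, hψx⟩ := hψI
  exact AddChar.sum_eq_zero_of_ne_one
    (ψ := ψ.compAddMonoidHom I.toAddSubgroup.subtype) (AddChar.ne_one_iff.2 ⟨⟨x, hxI⟩, hψx⟩)

theorem sum_units_addChar_mul_monoidHom_eq_zero_of_ideal [Finite R] [IsDomain M] [CharZero M]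
    (ψ : AddChar R M) (χ : Rˣ →* M) {I : Ideal R} (hI : I ≤ Ideal.jacobson ⊥)
    (hψI : ∃ x ∈ I, ψ x ≠ 1) (hχI : ∀ u : Rˣ, (u : R) - 1 ∈ I → χ u = 1) :
    ∑ u : Rˣ, ψ (u : R) * χ u = 0 := by
  have := Fintype.ofFinite I
  have hshift (z : I) : ∑ u : Rˣ, ψ (u : R) * χ u = ∑ u : Rˣ, ψ ((u : R) * (1 + z)) * χ u := by
    obtain ⟨t, ht⟩ : IsUnit (1 + (z : R)) := by
      simpa [add_comm] using Ideal.mem_jacobson_bot.1 (hI z.2) 1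
    rw [← ht, sum_units_addChar_mul_monoidHom_eq_mul_sum_mul_right ψ χ t,
      hχI t (by simp [ht]), one_mul]
  have hvanish (u : Rˣ) : ∑ z : I, ψ ((u : R) * z) = 0 := by
    obtain ⟨x, hxI, hψx⟩ := hψI
    refine (ψ.mulShift u).sum_mem_ideal_eq_zero ⟨(u⁻¹ : Rˣ) * x, I.mul_mem_left _ hxI, ?_⟩
    simpa [← mul_assoc] using hψx
  have hcard : (Fintype.card I : M) * ∑ u : Rˣ, ψ (u : R) * χ u = 0 := calc
    (Fintype.card I : M) * ∑ u : Rˣ, ψ (u : R) * χ u = ∑ z : I, ∑ u : Rˣ, ψ ((u : R) * (1 + z)) * χ u := by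
      rw [← sum_congr rfl fun z _ => hshift z, sum_const, card_univ, nsmul_eq_mul]
    _ = ∑ u : Rˣ, ψ (u : R) * χ u * ∑ z : I, ψ ((u : R) * z) := by
      rw [sum_comm]
      simp only [mul_sum, mul_one_add, AddChar.map_add_eq_mul]
      exact sum_congr rfl fun u _ => sum_congr rfl fun z _ => by ring
    _ = 0 := sum_eq_zero fun u _ => by rw [hvanish u, mul_zero]
  exact (mul_eq_zero.1 hcard).resolve_left (Nat.cast_ne_zero.2 Fintype.card_ne_zero)

end GaussSum

theorem gauss_sum_eq_zero_of_valuations_differ_general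
    (R : Type*) [CommRing R] [Fintype R] [DecidableEq R] [IsLocalRing R]
    (π : R) (hπ : IsLocalRing.maximalIdeal R = Ideal.span {π})
    (ψ : AddChar R ℂ) (χ : Rˣ →* ℂ) (hχ : χ ≠ 1) (k j : ℕ)
    (hkj : k ≠ j)
    (hψtriv : ∀ x ∈ Ideal.span {π ^ k}, ψ x = 1)
    (hψmin : ∀ i < k, ∃ x ∈ Ideal.span {π ^ i}, ψ x ≠ 1)
    (hχtriv : ∀ u : Rˣ, (u : R) - 1 ∈ Ideal.span {π ^ j} → χ u = 1)
    (hχmin : ∀ i < j, ∃ u : Rˣ, (u : R) - 1 ∈ Ideal.span {π ^ i} ∧ χ u ≠ 1) :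
    ∑ u : Rˣ, ψ (u : R) * χ u = 0 := by
  rcases hkj.lt_or_gt with hkj | hjk
  · obtain ⟨t, ht, hχt⟩ := hχmin k hkj
    refine sum_units_addChar_mul_monoidHom_eq_zero_of_mul_invariant ψ χ hχt fun x => ?_
    rw [show x * t = x + x * (t - 1) by ring, AddChar.map_add_eq_mul,
      hψtriv _ (Ideal.mul_mem_left _ x ht), mul_one]
  · have hj : j ≠ 0 := by
      rintro rfl
      exact hχ (MonoidHom.ext fun u => hχtriv u (by simp))
    have hle : Ideal.span {π ^ (k - 1)} ≤ Ideal.span {π ^ j} :=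
      Ideal.span_singleton_le_span_singleton.2 (pow_dvd_pow π (by omega))
    have hjac : Ideal.span {π ^ j} ≤ Ideal.jacobson ⊥ := calc
      Ideal.span {π ^ j} ≤ Ideal.span {π} :=
        Ideal.span_singleton_le_span_singleton.2 (dvd_pow_self π hj)
      _ ≤ Ideal.jacobson ⊥ := hπ ▸ IsLocalRing.maximalIdeal_le_jacobson ⊥
    exact sum_units_addChar_mul_monoidHom_eq_zero_of_ideal ψ χ (hle.trans hjac)
      (hψmin (k - 1) (by omega)) fun u hu => hχtriv u (hle hu)

theorem gauss_sum_eq_zero_of_valuations_differ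
    (R : Type*) [CommRing R] [Fintype R] [DecidableEq R] [IsLocalRing R]
    [IsPrincipalIdealRing R]
    (π : R) (hπ : IsLocalRing.maximalIdeal R = Ideal.span {π})
    (ψ : AddChar R ℂ) (χ : Rˣ →* ℂ) (hψ : ψ ≠ 1) (hχ : χ ≠ 1) (k j : ℕ)
    (hkj : k ≠ j)
    (hψtriv : ∀ x ∈ Ideal.span {π ^ k}, ψ x = 1)
    (hψmin : ∀ i < k, ∃ x ∈ Ideal.span {π ^ i}, ψ x ≠ 1)
    (hχtriv : ∀ u : Rˣ, (u : R) - 1 ∈ Ideal.span {π ^ j} → χ u = 1)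
    (hχmin : ∀ i < j, ∃ u : Rˣ, (u : R) - 1 ∈ Ideal.span {π ^ i} ∧ χ u ≠ 1) :
    ∑ u : Rˣ, ψ (u : R) * χ u = 0 :=
  gauss_sum_eq_zero_of_valuations_differ_general R π hπ ψ χ hχ k j hkj hψtriv hψmin hχtriv hχmin
end

section
/- Let R be a finite valuation ring with parameters q, ℓ and χ the trivial multiplicative character. If ψ is a nontrivial additive character of R that is trivial on the maximal ideal (π), then Σ_{u ∈ R^×} ψ(u) = -q^{ℓ-1}; if ψ is nontrivial on (π), then Σ_{u ∈ R^×} ψ(u) = 0. -/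
/-!
Since `ψ` is nontrivial, `∑ x : R, ψ x = 0`, and `R` is the disjoint union of `Rˣ` and the
maximal ideal `(π)`. On `(π)` the sum of `ψ` is `#(π)` if `ψ` is trivial there and `0` otherwise.
Finally `#(π) = q ^ (ℓ - 1)`: as long as `π ^ i ≠ 0`, multiplication by `π ^ i` maps `R` onto
`(π ^ i)` and pulls `(π ^ (i + 1))` back to `(π)`, so each step of the chain
`R ⊇ (π) ⊇ ⋯ ⊇ (π ^ ℓ) = 0` has index `q`.
-/

open Finset IsLocalRing

namespace IsLocalRing

variable {R : Type*} [CommRing R] [IsLocalRing R]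

theorem sum_units_add_sum_maximalIdeal [Fintype R] [DecidableEq R] [Fintype (maximalIdeal R)]
    {M : Type*} [AddCommMonoid M] (f : R → M) :
    ∑ u : Rˣ, f u + ∑ x : maximalIdeal R, f x = ∑ x, f x := by
  set units := univ.map ⟨((↑) : Rˣ → R), Units.val_injective⟩
  have h_compl : ∀ x, x ∈ unitsᶜ ↔ x ∈ maximalIdeal R := fun x => by
    simp [units, mem_maximalIdeal, mem_nonunits_iff, IsUnit, eq_comm]
  rw [← sum_add_sum_compl units f, sum_map, sum_subtype _ h_compl]
  rfl

variable {π : R}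

theorem pow_mul_mem_span_pow_succ_iff (hπ : maximalIdeal R = Ideal.span {π}) {i : ℕ}
    (hi : π ^ i ≠ 0) {x : R} :
    π ^ i * x ∈ Ideal.span {π ^ (i + 1)} ↔ x ∈ Ideal.span {π} := by
  simp only [Ideal.mem_span_singleton']
  constructor
  · rintro ⟨y, hy⟩
    have h_nonunit : x - y * π ∈ maximalIdeal R := fun hu =>
      hi <| hu.mul_left_eq_zero.mp (by linear_combination -hy)
    obtain ⟨z, hz⟩ := Ideal.mem_span_singleton'.mp (hπ ▸ h_nonunit)
    exact ⟨z + y, by linear_combination hz⟩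
  · rintro ⟨y, rfl⟩
    exact ⟨y, by ring⟩

theorem index_span_pow_succ (hπ : maximalIdeal R = Ideal.span {π}) {i : ℕ} (hi : π ^ i ≠ 0) :
    (Ideal.span {π ^ (i + 1)}).toAddSubgroup.index =
      Nat.card (ResidueField R) * (Ideal.span {π ^ i}).toAddSubgroup.index := by
  let f := AddMonoidHom.mulLeft (π ^ i)
  have h_comap : (Ideal.span {π ^ (i + 1)}).toAddSubgroup.comap f =
      (maximalIdeal R).toAddSubgroup := by
    ext x
    exact (pow_mul_mem_span_pow_succ_iff hπ hi).trans (hπ ▸ Iff.rfl)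
  have h_range : f.range = (Ideal.span {π ^ i}).toAddSubgroup := by
    ext x
    simp [f, Ideal.mem_span_singleton', mul_comm, eq_comm]
  have h_le : (Ideal.span {π ^ (i + 1)}).toAddSubgroup ≤ (Ideal.span {π ^ i}).toAddSubgroup :=
    Ideal.span_singleton_le_span_singleton.mpr (pow_dvd_pow π i.le_succ)
  rw [← AddSubgroup.relIndex_mul_index h_le, ← h_range, ← AddSubgroup.index_comap, h_comap]
  rfl

theorem index_span_pow (hπ : maximalIdeal R = Ideal.span {π}) {n : ℕ}
    (hne : ∀ i < n, π ^ i ≠ 0) :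
    (Ideal.span {π ^ n}).toAddSubgroup.index = Nat.card (ResidueField R) ^ n := by
  induction n with
  | zero => simp
  | succ n ih =>
    rw [index_span_pow_succ hπ (hne n n.lt_succ_self),
      ih fun i hi => hne i (hi.trans n.lt_succ_self), pow_succ']

theorem card_maximalIdeal [Finite R] (hπ : maximalIdeal R = Ideal.span {π}) {ℓ : ℕ}
    (hnil : π ^ ℓ = 0) (hne : ∀ i < ℓ, π ^ i ≠ 0) :
    Nat.card (maximalIdeal R) = Nat.card (ResidueField R) ^ (ℓ - 1) := by
  have h_card : Nat.card R = Nat.card (ResidueField R) ^ ℓ := by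
    rw [← index_span_pow hπ hne, hnil, Ideal.span_singleton_eq_bot.mpr rfl]
    exact AddSubgroup.index_bot.symm
  have hℓ : ℓ ≠ 0 := by
    rintro rfl
    exact one_ne_zero (pow_zero π ▸ hnil)
  have h_lagrange := (maximalIdeal R).toAddSubgroup.card_mul_index
  rw [h_card, ← Nat.sub_one_add_one hℓ, pow_succ] at h_lagrange
  exact Nat.eq_of_mul_eq_mul_right Nat.card_pos h_lagrange

end IsLocalRing

theorem AddChar.sum_addSubgroup_eq_zero {A M : Type*} [AddCommGroup A] [CommRing M] [IsDomain M]
    [CharZero M] (H : AddSubgroup A) [Fintype H] {ψ : AddChar A M} (h : ∃ x ∈ H, ψ x ≠ 1) : ∑ x : H, ψ x = 0 := by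
  obtain ⟨x, hx, hψx⟩ := h
  refine (AddChar.sum_eq_zero_iff_ne_zero (ψ := ψ.compAddMonoidHom H.subtype)).mpr
    fun h_triv => hψx ?_
  exact DFunLike.congr_fun h_triv (⟨x, hx⟩ : H)

theorem gauss_sum_trivial_mult_char_general
    (R : Type*) [CommRing R] [Fintype R] [DecidableEq R] [IsLocalRing R]
    (π : R) (hπ : IsLocalRing.maximalIdeal R = Ideal.span {π})
    (q ℓ : ℕ) (hq : Nat.card (IsLocalRing.ResidueField R) = q)
    (hnil : π ^ ℓ = 0) (hmin : ∀ m, 0 < m → m < ℓ → π ^ m ≠ 0)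
    (ψ : AddChar R ℂ) (hψ : ψ ≠ 1) :
    ((∀ x ∈ Ideal.span {π}, ψ x = 1) →
        ∑ u : Rˣ, ψ (u : R) = -((q : ℂ) ^ (ℓ - 1))) ∧
      ((∃ x ∈ Ideal.span {π}, ψ x ≠ 1) → ∑ u : Rˣ, ψ (u : R) = 0) := by
  classical
  have hne : ∀ i < ℓ, π ^ i ≠ 0 := fun i hi => by
    rcases i.eq_zero_or_pos with rfl | hi0
    · exact (pow_zero π).symm ▸ one_ne_zero
    · exact hmin i hi0 hi
  have h_split : ∑ u : Rˣ, ψ u + ∑ x : maximalIdeal R, ψ x = 0 := by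
    rw [sum_units_add_sum_maximalIdeal, AddChar.sum_eq_zero_iff_ne_zero.mpr hψ]
  refine ⟨fun h_triv => ?_, fun h_nontriv => ?_⟩
  · have h_ideal : ∑ x : maximalIdeal R, ψ x = (q : ℂ) ^ (ℓ - 1) := by
      have h_one : ∀ x : maximalIdeal R, ψ x = 1 := fun x => h_triv x (hπ ▸ x.2)
      rw [Fintype.sum_congr _ _ h_one, sum_const, card_univ, ← Nat.card_eq_fintype_card,
        card_maximalIdeal hπ hnil hne, hq]
      simp
    linear_combination h_split - h_ideal
  · have h_ideal : ∑ x : maximalIdeal R, ψ x = 0 :=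
      AddChar.sum_addSubgroup_eq_zero (maximalIdeal R).toAddSubgroup (hπ ▸ h_nontriv)
    linear_combination h_split - h_ideal

theorem gauss_sum_trivial_mult_char
    (R : Type*) [CommRing R] [Fintype R] [DecidableEq R] [IsLocalRing R]
    [IsPrincipalIdealRing R]
    (π : R) (hπ : IsLocalRing.maximalIdeal R = Ideal.span {π})
    (q ℓ : ℕ) (hq : Nat.card (IsLocalRing.ResidueField R) = q)
    (hℓpos : 0 < ℓ) (hnil : π ^ ℓ = 0) (hmin : ∀ m, 0 < m → m < ℓ → π ^ m ≠ 0)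
    (ψ : AddChar R ℂ) (hψ : ψ ≠ 1) :
    ((∀ x ∈ Ideal.span {π}, ψ x = 1) →
        ∑ u : Rˣ, ψ (u : R) = -((q : ℂ) ^ (ℓ - 1))) ∧
      ((∃ x ∈ Ideal.span {π}, ψ x ≠ 1) → ∑ u : Rˣ, ψ (u : R) = 0) :=
  gauss_sum_trivial_mult_char_general R π hπ q ℓ hq hnil hmin ψ hψ
end

section
/- Let R ⊆ S be a standard extension of finite valuation rings, and χ a nontrivial multiplicative character of S^× whose restriction to R^× is trivial but whose valuation is k ≥ 2. Then the Eisenstein sum E(χ) = Σ_{Tr(y)=1} χ(y) equals 0. -/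
open Finset

private lemma sum_eq_zero_of_stable {G : Type*} [Group G] [Fintype G]
    [DecidableEq G] (χ : G →* ℂ) (A : Finset G) (u : G) (hu : χ u ≠ 1)
    (h1 : ∀ y ∈ A, u * y ∈ A) (h2 : ∀ y ∈ A, u⁻¹ * y ∈ A) :
    ∑ y ∈ A, χ y = 0 := by
  have key : ∑ y ∈ A, χ (u * y) = ∑ y ∈ A, χ y := by
    refine Finset.sum_nbij' (fun y => u * y) (fun y => u⁻¹ * y) h1 h2 ?_ ?_ ?_
    · intro a _; simp
    · intro a _; simp
    · intro a _; rfl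
  have h3 : (χ u - 1) * ∑ y ∈ A, χ y = 0 := by
    have hmul : χ u * ∑ y ∈ A, χ y = ∑ y ∈ A, χ y := by
      rw [Finset.mul_sum]
      simpa [map_mul] using key
    linear_combination hmul
  rcases mul_eq_zero.mp h3 with h | h
  · exact absurd (by linear_combination h) hu
  · exact h

private lemma eisenstein_aux {R : Type*} [CommRing R] [Fintype R] [DecidableEq R]
    [IsLocalRing R]
    {S : Type*} [CommRing S] [Fintype S] [DecidableEq S] [Algebra R S]
    (π : R) (hπ : IsLocalRing.maximalIdeal R = Ideal.span {π})
    (χ : Sˣ →* ℂ)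
    (hres : ∀ r : Rˣ, χ (Units.map (algebraMap R S : R →+* S).toMonoidHom r) = 1)
    (u : Sˣ) (hu1 : (u : S) - 1 ∈ Ideal.span {algebraMap R S π}) (hu2 : χ u ≠ 1) :
    ∑ y ∈ Finset.univ.filter
        (fun y : Sˣ => Algebra.trace R S (y : S) = 1), χ y = 0 := by
  classical
  -- the trace maps the ideal I = (π)S into the maximal ideal
  have htrace_span : ∀ s : S, s ∈ Ideal.span {algebraMap R S π} →
      Algebra.trace R S s ∈ IsLocalRing.maximalIdeal R := by
    intro s hs
    rw [Ideal.mem_span_singleton] at hs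
    obtain ⟨c, rfl⟩ := hs
    rw [hπ, Ideal.mem_span_singleton]
    refine ⟨Algebra.trace R S c, ?_⟩
    rw [← Algebra.smul_def]
    exact ((Algebra.trace R S).map_smul π c)
  -- stability under multiplication by v with v - 1 ∈ I
  have hstab : ∀ v : Sˣ, ((v : S) - 1 ∈ Ideal.span {algebraMap R S π}) → ∀ y : Sˣ,
      Algebra.trace R S (y : S) ∈ IsLocalRing.maximalIdeal R →
      Algebra.trace R S ((v * y : Sˣ) : S) ∈ IsLocalRing.maximalIdeal R := by
    intro v hv y hy
    have hdec : ((v * y : Sˣ) : S) = (y : S) + ((v : S) - 1) * (y : S) := by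
      push_cast; ring
    have hmem : Algebra.trace R S (((v : S) - 1) * (y : S)) ∈ IsLocalRing.maximalIdeal R :=
      htrace_span _ (Ideal.mul_mem_right _ _ hv)
    rw [hdec, map_add]
    exact Ideal.add_mem _ hy hmem
  have huinv : ((u⁻¹ : Sˣ) : S) - 1 ∈ Ideal.span {algebraMap R S π} := by
    have h1 : ((u⁻¹ : Sˣ) : S) * (u : S) = 1 := by
      rw [← Units.val_mul, inv_mul_cancel, Units.val_one]
    have heq : ((u⁻¹ : Sˣ) : S) - 1 = -(((u⁻¹ : Sˣ) : S) * ((u : S) - 1)) := by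
      rw [mul_sub, h1, mul_one, neg_sub]
    rw [heq]
    exact neg_mem (Ideal.mul_mem_left _ _ hu1)
  -- the set with non-unit trace sums to zero
  have hAsum : ∑ y ∈ Finset.univ.filter
      (fun y : Sˣ => Algebra.trace R S (y : S) ∈ IsLocalRing.maximalIdeal R), χ y = 0 := by
    refine sum_eq_zero_of_stable χ _ u hu2 ?_ ?_
    · intro y hy
      rw [Finset.mem_filter] at hy ⊢
      exact ⟨Finset.mem_univ _, hstab u hu1 y hy.2⟩
    · intro y hy
      rw [Finset.mem_filter] at hy ⊢
      exact ⟨Finset.mem_univ _, hstab u⁻¹ huinv y hy.2⟩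
  -- the whole sum is zero
  have htot : ∑ y : Sˣ, χ y = 0 := by
    refine sum_eq_zero_of_stable χ Finset.univ u hu2 ?_ ?_ <;>
      · intro y _; exact Finset.mem_univ _
  -- each fiber over a unit c equals the Eisenstein sum
  have hfiber : ∀ c : Rˣ, ∑ y ∈ Finset.univ.filter
      (fun y : Sˣ => Algebra.trace R S (y : S) = (c : R)), χ y
      = ∑ y ∈ Finset.univ.filter
      (fun y : Sˣ => Algebra.trace R S (y : S) = 1), χ y := by
    intro c
    set ι : Rˣ →* Sˣ := Units.map (algebraMap R S : R →+* S).toMonoidHom with hι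
    refine Finset.sum_nbij' (fun y => (ι c)⁻¹ * y) (fun y => ι c * y) ?_ ?_ ?_ ?_ ?_
    · intro y hy
      rw [Finset.mem_filter] at hy ⊢
      refine ⟨Finset.mem_univ _, ?_⟩
      have hval : (((ι c)⁻¹ * y : Sˣ) : S) = algebraMap R S ((c⁻¹ : Rˣ) : R) * (y : S) := by
        rw [← map_inv]
        rfl
      rw [hval, ← Algebra.smul_def, map_smul, hy.2, smul_eq_mul, Units.inv_mul]
    · intro y hy
      rw [Finset.mem_filter] at hy ⊢
      refine ⟨Finset.mem_univ _, ?_⟩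
      have hval : ((ι c * y : Sˣ) : S) = algebraMap R S ((c : Rˣ) : R) * (y : S) := rfl
      rw [hval, ← Algebra.smul_def, map_smul, hy.2, smul_eq_mul, mul_one]
    · intro a _; simp
    · intro a _; simp
    · intro a _
      rw [map_mul, map_inv, hres c, inv_one, one_mul]
  -- sum over unit-trace part, fiberwise
  have hpart : ∑ y ∈ Finset.univ.filter
      (fun y : Sˣ => Algebra.trace R S (y : S) ∉ IsLocalRing.maximalIdeal R), χ y
      = (Fintype.card Rˣ : ℂ) * ∑ y ∈ Finset.univ.filter
      (fun y : Sˣ => Algebra.trace R S (y : S) = 1), χ y := by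
    set s : Finset Sˣ := Finset.univ.filter
      (fun y : Sˣ => Algebra.trace R S (y : S) ∉ IsLocalRing.maximalIdeal R) with hs
    set g : Sˣ → Rˣ := fun y => if h : IsUnit (Algebra.trace R S (y : S)) then h.unit else 1
      with hg
    have hmaps : ∀ y ∈ s, g y ∈ (Finset.univ : Finset Rˣ) := fun _ _ => Finset.mem_univ _
    rw [← Finset.sum_fiberwise_of_maps_to hmaps χ]
    have hfib_eq : ∀ c : Rˣ, s.filter (fun y => g y = c)
        = Finset.univ.filter (fun y : Sˣ => Algebra.trace R S (y : S) = (c : R)) := by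
      intro c
      ext y
      simp only [hs, hg, Finset.mem_filter, Finset.mem_univ, true_and]
      constructor
      · rintro ⟨hy1, hy2⟩
        have hyu : IsUnit (Algebra.trace R S (y : S)) := by
          by_contra hcon
          exact hy1 (by rw [IsLocalRing.mem_maximalIdeal]; exact hcon)
        rw [dif_pos hyu] at hy2
        rw [← hy2]
        exact (hyu.unit_spec).symm
      · intro hy
        have hyu : IsUnit (Algebra.trace R S (y : S)) := hy ▸ c.isUnit
        refine ⟨?_, ?_⟩
        · intro hcon
          rw [IsLocalRing.mem_maximalIdeal, mem_nonunits_iff] at hcon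
          exact hcon hyu
        · rw [dif_pos hyu]
          exact Units.ext (by rw [hyu.unit_spec, hy])
    calc ∑ c : Rˣ, ∑ y ∈ s.filter (fun y => g y = c), χ y
        = ∑ _c : Rˣ, ∑ y ∈ Finset.univ.filter
            (fun y : Sˣ => Algebra.trace R S (y : S) = 1), χ y := by
          refine Finset.sum_congr rfl fun c _ => ?_
          rw [hfib_eq c, hfiber c]
      _ = (Fintype.card Rˣ : ℂ) * ∑ y ∈ Finset.univ.filter
            (fun y : Sˣ => Algebra.trace R S (y : S) = 1), χ y := by
          rw [Finset.sum_const, Finset.card_univ, nsmul_eq_mul]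
  -- combine
  have hsplit : ∑ y : Sˣ, χ y
      = (∑ y ∈ Finset.univ.filter
          (fun y : Sˣ => Algebra.trace R S (y : S) ∈ IsLocalRing.maximalIdeal R), χ y)
        + ∑ y ∈ Finset.univ.filter
          (fun y : Sˣ => Algebra.trace R S (y : S) ∉ IsLocalRing.maximalIdeal R), χ y := by
    rw [Finset.sum_filter_add_sum_filter_not]
  rw [htot, hAsum, hpart, zero_add] at hsplit
  have hcard : (Fintype.card Rˣ : ℂ) ≠ 0 := by
    simp [Fintype.card_ne_zero]
  rcases mul_eq_zero.mp hsplit.symm with h | h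
  · exact absurd h hcard
  · exact h

theorem eisenstein_eq_zero_of_high_valuation
    (R : Type*) [CommRing R] [Fintype R] [DecidableEq R] [IsLocalRing R] [IsPrincipalIdealRing R]
    (π : R) (hπ : IsLocalRing.maximalIdeal R = Ideal.span {π})
    (f : Polynomial R) (hf : f.Monic)
    (hirr : Irreducible
      (f.map (Ideal.Quotient.mk (IsLocalRing.maximalIdeal R))))
    [Fintype (AdjoinRoot f)] [DecidableEq (AdjoinRoot f)]
    (χ : (AdjoinRoot f)ˣ →* ℂ) (hχ : χ ≠ 1)
    (hres : ∀ r : Rˣ,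
      χ (Units.map (algebraMap R (AdjoinRoot f) : R →+* AdjoinRoot f).toMonoidHom r) = 1)
    (k : ℕ) (hk : 2 ≤ k)
    (hχtriv : ∀ u : (AdjoinRoot f)ˣ,
      (u : AdjoinRoot f) - 1 ∈ Ideal.span {algebraMap R (AdjoinRoot f) π ^ k} → χ u = 1)
    (hχmin : ∀ j < k, ∃ u : (AdjoinRoot f)ˣ,
      (u : AdjoinRoot f) - 1 ∈ Ideal.span {algebraMap R (AdjoinRoot f) π ^ j} ∧ χ u ≠ 1) :
    ∑ y ∈ Finset.univ.filter
        (fun y : (AdjoinRoot f)ˣ => Algebra.trace R (AdjoinRoot f) (y : AdjoinRoot f) = 1),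
      χ y = 0 := by
  obtain ⟨u, hu1, hu2⟩ := hχmin 1 (by omega)
  rw [pow_one] at hu1
  exact eisenstein_aux π hπ χ hres u hu1 hu2
end

section
/- Let F be a finite field with q elements, q odd, and n ≥ 2. For nonempty subsets A, B ⊆ F^n, let N₁(A,B) be the number of pairs (a,b) ∈ A×B with dot product a·b = 1. Then |N₁(A,B) - q^{-1}|A||B|| < q^{(n-1)/2}·√(|A||B|). -/
/-!
Write `N_a = #{b ∈ B | a ⬝ᵥ b = 1}`, so that `q N - |A||B| = ∑_{a ∈ A} (q N_a - |B|)`. By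
Cauchy–Schwarz it suffices to bound the second moment `∑_{a ∈ F^n} (q N_a - |B|)^2` by
`q^n (q - 1) |B|`, since `q^n (q - 1) < q^{n+1}`. Expanding the square, the
summands `q·[a ⬝ᵥ b = 1] - 1` are the character sums `∑_{s ≠ 0} ψ (s (a ⬝ᵥ b - 1))` for a
nontrivial additive character `ψ`, and orthogonality over `a` evaluates the correlation of the
summands for `b` and `b'` as `q^n ∑_{u ≠ 0, b = u b'} (q·[u = 1] - 1)`: at most `q^n (q - 1)` if
`b = b'`, and nonpositive otherwise.
-/

open Finset

namespace AddChar

lemma map_sum_eq_prod {A M ι : Type*} [AddCommMonoid A] [CommMonoid M] (ψ : AddChar A M)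
    (s : Finset ι) (f : ι → A) : ψ (∑ i ∈ s, f i) = ∏ i ∈ s, ψ (f i) := by
  induction s using Finset.cons_induction with
  | empty => simp
  | cons i s hi ih => rw [sum_cons, prod_cons, map_add_eq_mul, ih]

variable {F R : Type*} [Field F] [Fintype F] [DecidableEq F] [CommRing R] [IsDomain R]
  {ψ : AddChar F R}

lemma sum_erase_zero_mulShift (hψ : ψ.IsPrimitive) (x : F) :
    ∑ s ∈ univ.erase 0, ψ (s * x) = (if x = 0 then (Fintype.card F : R) else 0) - 1 := by
  rw [sum_erase_eq_sub (mem_univ 0), sum_mulShift x hψ, zero_mul, map_zero_eq_one, Nat.cast_ite,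
    Nat.cast_zero]

lemma sum_apply_dotProduct {ι : Type*} [Fintype ι] [DecidableEq ι] (hψ : ψ.IsPrimitive)
    (v : ι → F) :
    ∑ a : ι → F, ψ (a ⬝ᵥ v) = if v = 0 then (Fintype.card F : R) ^ Fintype.card ι else 0 := by
  simp_rw [dotProduct, map_sum_eq_prod]
  rw [← Fintype.prod_sum (fun i (t : F) => ψ (t * v i))]
  simp only [sum_mulShift _ hψ, Nat.cast_ite, Nat.cast_zero, Fintype.prod_ite_zero, prod_const,
    card_univ, ← funext_iff, Pi.zero_def]

end AddChar

section Incidence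

variable {F ι : Type*} [Field F] [Fintype F] [DecidableEq F] [Fintype ι] [DecidableEq ι]

def incidenceDeviation (a b : ι → F) : ℤ := (if a ⬝ᵥ b = 1 then (Fintype.card F : ℤ) else 0) - 1

lemma sum_incidenceDeviation_mul_eq_sum_addChar {ψ : AddChar F ℂ} (hψ : ψ.IsPrimitive)
    (b b' : ι → F) :
    ∑ a : ι → F, (incidenceDeviation a b * incidenceDeviation a b' : ℂ) =
      ∑ s ∈ univ.erase 0, ∑ t ∈ univ.erase 0,
        (if s • b - t • b' = 0 then (Fintype.card F : ℂ) ^ Fintype.card ι else 0) * ψ (t - s) := by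
  have hdev : ∀ a, (incidenceDeviation a b : ℂ) = ∑ s ∈ univ.erase 0, ψ (s * (a ⬝ᵥ b - 1)) := by
    simp [incidenceDeviation, ψ.sum_erase_zero_mulShift hψ, sub_eq_zero]
  have hdev' : ∀ a, (incidenceDeviation a b' : ℂ) = ∑ t ∈ univ.erase 0, ψ (t * (1 - a ⬝ᵥ b')) := by
    simp [incidenceDeviation, ψ.sum_erase_zero_mulShift hψ, sub_eq_zero, @eq_comm F 1]
  simp_rw [← ψ.sum_apply_dotProduct hψ, sum_mul, hdev, hdev', sum_mul_sum, ← ψ.map_add_eq_mul]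
  rw [sum_comm]
  refine sum_congr rfl fun s _ ↦ ?_
  rw [sum_comm]
  refine sum_congr rfl fun t _ ↦ sum_congr rfl fun a _ ↦ ?_
  simp only [dotProduct_sub, dotProduct_smul, smul_eq_mul]
  ring_nf

lemma sum_incidenceDeviation_mul (b b' : ι → F) :
    ∑ a : ι → F, incidenceDeviation a b * incidenceDeviation a b' =
      (Fintype.card F : ℤ) ^ Fintype.card ι *
        ∑ u ∈ univ.erase (0 : F) with b = u • b',
          ((if u = 1 then (Fintype.card F : ℤ) else 0) - 1) := by
  obtain ⟨ψ, hψ1⟩ := (AddChar.exists_apply_ne_zero (a := (1 : F))).mpr one_ne_zero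
  have hψ : ψ.IsPrimitive := AddChar.IsPrimitive.of_ne_one fun h ↦ hψ1 (by rw [h]; rfl)
  set E := univ.erase (0 : F)
  set Q := (Fintype.card F : ℂ) ^ Fintype.card ι
  have hE : ∀ s ∈ E, s ≠ 0 := fun s hs ↦ ne_of_mem_erase hs
  have hsubst : ∀ s ∈ E, ∑ t ∈ E, (if s • b - t • b' = 0 then Q else 0) * ψ (t - s) =
      ∑ u ∈ E, if b = u • b' then Q * ψ (s * (u - 1)) else 0 := by
    intro s hs
    refine (sum_nbij' (· * s) (· / s) (fun u hu ↦ ?_) (fun t ht ↦ ?_)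
      (fun u _ ↦ mul_div_cancel_right₀ u (hE s hs)) (fun t _ ↦ div_mul_cancel₀ t (hE s hs))
      (fun u _ ↦ ?_)).symm
    · exact mem_erase.mpr ⟨mul_ne_zero (hE u hu) (hE s hs), mem_univ _⟩
    · exact mem_erase.mpr ⟨div_ne_zero (hE t ht) (hE s hs), mem_univ _⟩
    · have hcond : s • b - (u * s) • b' = 0 ↔ b = u • b' := by
        rw [mul_comm, mul_smul, ← smul_sub, smul_eq_zero_iff_right (hE s hs), sub_eq_zero]
      rw [ite_mul, zero_mul, if_congr hcond rfl rfl, show u * s - s = s * (u - 1) by ring]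
  apply Int.cast_injective (α := ℂ)
  push_cast
  rw [sum_incidenceDeviation_mul_eq_sum_addChar hψ, sum_congr rfl hsubst, sum_comm, sum_filter,
    mul_sum]
  refine sum_congr rfl fun u _ ↦ ?_
  by_cases h : b = u • b'
  · simp only [if_pos h]
    rw [← mul_sum]
    exact congrArg _ ((ψ.sum_erase_zero_mulShift hψ _).trans (by simp only [sub_eq_zero]))
  · simp only [h, if_false, sum_const_zero, mul_zero]

lemma sum_incidenceDeviation_mul_le (b b' : ι → F) :
    ∑ a : ι → F, incidenceDeviation a b * incidenceDeviation a b' ≤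
      if b = b' then (Fintype.card F : ℤ) ^ Fintype.card ι * (Fintype.card F - 1) else 0 := by
  rw [sum_incidenceDeviation_mul, ← mul_ite_zero]
  refine mul_le_mul_of_nonneg_left ?_ (by positivity)
  calc ∑ u ∈ univ.erase (0 : F) with b = u • b', ((if u = 1 then (Fintype.card F : ℤ) else 0) - 1)
      ≤ ∑ u ∈ univ.erase (0 : F) with b = u • b', if u = 1 then (Fintype.card F : ℤ) - 1 else 0 :=
        sum_le_sum fun u _ ↦ by split_ifs <;> simp
    _ = _ := by simp [sum_ite_eq']

lemma sum_sq_card_dotProduct_eq_one_sub_le (B : Finset (ι → F)) :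
    ∑ a : ι → F, ((Fintype.card F : ℤ) * #{b ∈ B | a ⬝ᵥ b = 1} - #B) ^ 2 ≤
      (Fintype.card F : ℤ) ^ Fintype.card ι * (Fintype.card F - 1) * #B := by
  have hdev : ∀ a : ι → F, (Fintype.card F : ℤ) * #{b ∈ B | a ⬝ᵥ b = 1} - #B =
      ∑ b ∈ B, incidenceDeviation a b := by
    intro a
    simp [incidenceDeviation, sum_sub_distrib, sum_ite, mul_comm]
  calc ∑ a : ι → F, ((Fintype.card F : ℤ) * #{b ∈ B | a ⬝ᵥ b = 1} - #B) ^ 2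
      = ∑ b ∈ B, ∑ b' ∈ B, ∑ a : ι → F, incidenceDeviation a b * incidenceDeviation a b' := by
        simp_rw [hdev, sq, sum_mul_sum]
        rw [sum_comm]
        exact sum_congr rfl fun b _ ↦ sum_comm
    _ ≤ ∑ b ∈ B, ∑ b' ∈ B,
          if b = b' then (Fintype.card F : ℤ) ^ Fintype.card ι * (Fintype.card F - 1) else 0 := by
        gcongr with b _ b' _
        exact sum_incidenceDeviation_mul_le b b'
    _ = _ := by simp [mul_comm]

lemma sq_card_dotProduct_eq_one_sub_lt {A B : Finset (ι → F)} (hA : A.Nonempty)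
    (hB : B.Nonempty) :
    ((Fintype.card F : ℤ) * #{p ∈ A ×ˢ B | p.1 ⬝ᵥ p.2 = 1} - #A * #B) ^ 2 <
      #A * #B * (Fintype.card F : ℤ) ^ (Fintype.card ι + 1) := by
  have hcount : (Fintype.card F : ℤ) * #{p ∈ A ×ˢ B | p.1 ⬝ᵥ p.2 = 1} - #A * #B =
      ∑ a ∈ A, ((Fintype.card F : ℤ) * #{b ∈ B | a ⬝ᵥ b = 1} - #B) := by
    rw [card_filter, sum_product]
    simp only [← card_filter]
    push_cast
    rw [mul_sum, sum_sub_distrib, sum_const, nsmul_eq_mul]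
  have hpos : 0 < (#A * #B : ℤ) * (Fintype.card F : ℤ) ^ Fintype.card ι := by
    have := hA.card_pos; have := hB.card_pos; positivity
  calc ((Fintype.card F : ℤ) * #{p ∈ A ×ˢ B | p.1 ⬝ᵥ p.2 = 1} - #A * #B) ^ 2
      ≤ #A * ∑ a ∈ A, ((Fintype.card F : ℤ) * #{b ∈ B | a ⬝ᵥ b = 1} - #B) ^ 2 := by
        rw [hcount]; exact sq_sum_le_card_mul_sum_sq
    _ ≤ #A * ∑ a : ι → F, ((Fintype.card F : ℤ) * #{b ∈ B | a ⬝ᵥ b = 1} - #B) ^ 2 := by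
        gcongr
        exact subset_univ A
    _ ≤ #A * ((Fintype.card F : ℤ) ^ Fintype.card ι * (Fintype.card F - 1) * #B) := by
        gcongr
        exact sum_sq_card_dotProduct_eq_one_sub_le B
    _ < #A * #B * (Fintype.card F : ℤ) ^ (Fintype.card ι + 1) := by
        rw [pow_succ]; linarith

end Incidence

lemma abs_sub_inv_mul_lt_of_sq_lt {q N m : ℝ} {k : ℕ} (hq : 0 < q)
    (h : (q * N - m) ^ 2 < m * q ^ (k + 1)) :
    |N - q⁻¹ * m| < q ^ (((k : ℝ) - 1) / 2) * √m := by
  have hm : 0 ≤ m := by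
    nlinarith [sq_nonneg (q * N - m), pow_pos hq (k + 1)]
  have hrhs : q ^ (((k : ℝ) - 1) / 2) * √m * q = √(m * q ^ (k + 1)) := by
    rw [Real.sqrt_mul hm, Real.sqrt_eq_rpow (q ^ _), ← Real.rpow_natCast, ← Real.rpow_mul hq.le,
      mul_comm _ √m, mul_assoc, ← Real.rpow_add_one hq.ne']
    congr 2
    push_cast
    ring
  have hlhs : |N - q⁻¹ * m| * q = |q * N - m| := by
    have : (N - q⁻¹ * m) * q = q * N - m := by field_simp
    rw [← this, abs_mul, abs_of_pos hq]
  rw [← mul_lt_mul_iff_left₀ hq, hlhs, hrhs]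
  exact Real.lt_sqrt_of_sq_lt (by rwa [sq_abs])

theorem dot_product_count_estimate_general
    (F : Type*) [Field F] [Fintype F] [DecidableEq F]
    (q n : ℕ) (hq : Fintype.card F = q)
    (A B : Finset (Fin n → F)) (hA : A.Nonempty) (hB : B.Nonempty) :
    |((((A ×ˢ B).filter (fun p => dotProduct p.1 p.2 = 1)).card : ℝ) -
        (q : ℝ)⁻¹ * A.card * B.card)| <
      (q : ℝ) ^ (((n : ℝ) - 1) / 2) * Real.sqrt (A.card * B.card) := by
  subst hq
  have h := sq_card_dotProduct_eq_one_sub_lt hA hB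
  rw [Fintype.card_fin] at h
  rw [mul_assoc]
  exact abs_sub_inv_mul_lt_of_sq_lt (by exact_mod_cast Fintype.card_pos) (by exact_mod_cast h)

theorem dot_product_count_estimate
    (F : Type*) [Field F] [Fintype F] [DecidableEq F]
    (q n : ℕ) (hq : Fintype.card F = q) (hqodd : Odd q) (hn : 2 ≤ n)
    (A B : Finset (Fin n → F)) (hA : A.Nonempty) (hB : B.Nonempty) :
    |((((A ×ˢ B).filter (fun p => dotProduct p.1 p.2 = 1)).card : ℝ) -
        (q : ℝ)⁻¹ * A.card * B.card)| <
      (q : ℝ) ^ (((n : ℝ) - 1) / 2) * Real.sqrt (A.card * B.card) :=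
  dot_product_count_estimate_general F q n hq A B hA hB
end

section
/- Let R be a finite valuation ring with odd residue characteristic and S = R[√j] a standard quadratic extension, where j ∈ R^× lifts a nonsquare of the residue field. Then the norm map N : S^× → R^×, N(a + b√j) = a² - j b², is surjective. -/
/-!
Over the residue field every element is of the form `x² - j̄ y²` (Chevalley–Warning). Lift `x, y`
to `a, b`; as `r` is a unit, one of them has nonzero residue, and that coordinate can be corrected
so that the equation holds exactly: in a finite local ring with `2` invertible, an element whose
residue is a nonzero square is a square, because squaring is injective, hence bijective, on the
elements of residue `1`.
-/

open IsLocalRing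

open Polynomial in
theorem FiniteField.exists_sq_sub_mul_sq_eq {F : Type*} [Field F] [Fintype F]
    (hF : Fintype.card F % 2 = 1) {d : F} (hd : d ≠ 0) (c : F) :
    ∃ x y : F, x ^ 2 - d * y ^ 2 = c := by
  obtain ⟨x, y, h⟩ := exists_root_sum_quadratic (f := X ^ 2 - C c) (g := C (-d) * X ^ 2)
    (degree_X_pow_sub_C two_pos c) (degree_C_mul_X_pow 2 (neg_ne_zero.2 hd)) hF
  refine ⟨x, y, ?_⟩
  simp only [eval_sub, eval_mul, eval_pow, eval_X, eval_C] at h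
  linear_combination h

namespace IsLocalRing

variable {R : Type*} [CommRing R] [IsLocalRing R]

theorem sq_injOn_residue_eq_one (h2 : (2 : ResidueField R) ≠ 0) :
    Set.InjOn (· ^ 2) {x : R | residue R x = 1} := by
  intro x hx y hy hxy
  have hunit : IsUnit (x + y) := by
    rw [← residue_ne_zero_iff_isUnit, map_add, hx, hy, one_add_one_eq_two]
    exact h2
  have hprod : (x + y) * (x - y) = 0 := by linear_combination hxy
  exact sub_eq_zero.1 ((hunit.mul_right_eq_zero).1 hprod)

theorem exists_sq_eq_of_residue_eq_one [Finite R] (h2 : (2 : ResidueField R) ≠ 0) {w : R}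
    (hw : residue R w = 1) : ∃ t, residue R t = 1 ∧ t ^ 2 = w := by
  have hmaps : Set.MapsTo (· ^ 2) {x : R | residue R x = 1} {x | residue R x = 1} :=
    fun x hx ↦ by simp_all
  have hbij := (Set.toFinite _).injOn_iff_bijOn_of_mapsTo hmaps |>.1 (sq_injOn_residue_eq_one h2)
  exact hbij.surjOn hw

theorem isSquare_of_residue_eq_sq [Finite R] (h2 : (2 : ResidueField R) ≠ 0) {w : R}
    {c : ResidueField R} (hc : c ≠ 0) (hw : residue R w = c ^ 2) : IsSquare w := by
  obtain ⟨t, rfl⟩ := residue_surjective c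
  obtain ⟨u, rfl⟩ := (residue_ne_zero_iff_isUnit t).1 hc
  obtain ⟨v, -, hv⟩ := exists_sq_eq_of_residue_eq_one h2 (w := w * ↑u⁻¹ ^ 2) (by
    rw [map_mul, hw, ← map_pow, ← map_mul, ← map_one (residue R)]
    congr 1
    linear_combination (↑u * ↑u⁻¹ + 1 : R) * u.mul_inv)
  exact ⟨v * u, by linear_combination -(u : R) ^ 2 * hv - w * (u * u⁻¹ + 1 : R) * u.mul_inv⟩

end IsLocalRing

theorem norm_surjective_quadratic_extension_general
    (R : Type*) [CommRing R] [Fintype R] [IsLocalRing R]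
    (hqodd : Odd (Nat.card (IsLocalRing.ResidueField R)))
    (j : R) (hj : IsUnit j) :
    ∀ r : R, IsUnit r → ∃ a b : R, a ^ 2 - j * b ^ 2 = r := by
  intro r hr
  have : Finite (ResidueField R) := Finite.of_surjective _ residue_surjective
  have : Fintype (ResidueField R) := Fintype.ofFinite _
  have hcard : Fintype.card (ResidueField R) % 2 = 1 := by
    rwa [← Nat.card_eq_fintype_card, ← Nat.odd_iff]
  have h2 : (2 : ResidueField R) ≠ 0 :=
    Ring.two_ne_zero (mt FiniteField.even_card_iff_char_two.1 (by omega))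
  obtain ⟨u, rfl⟩ := hj
  have hu : residue R u * residue R ↑u⁻¹ = 1 := by rw [← map_mul, u.mul_inv, map_one]
  obtain ⟨x, y, hxy⟩ := FiniteField.exists_sq_sub_mul_sq_eq hcard
    ((residue_ne_zero_iff_isUnit _).2 u.isUnit) (residue R r)
  obtain ⟨a, rfl⟩ := residue_surjective x
  obtain ⟨b, rfl⟩ := residue_surjective y
  have hr0 := (residue_ne_zero_iff_isUnit r).2 hr
  by_cases ha : residue R a = 0
  · have hb : residue R b ≠ 0 := fun hb ↦ hr0 (by rw [← hxy, ha, hb]; ring)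
    obtain ⟨s, hs⟩ := isSquare_of_residue_eq_sq h2 (w := (a ^ 2 - r) * ↑u⁻¹) hb (by
      simp only [map_mul, map_sub, map_pow]
      linear_combination residue R ↑u⁻¹ * hxy + residue R b ^ 2 * hu)
    exact ⟨a, s, by linear_combination (u : R) * hs - (a ^ 2 - r) * u.mul_inv⟩
  · obtain ⟨s, hs⟩ := isSquare_of_residue_eq_sq h2 (w := r + u * b ^ 2) ha (by
      simp only [map_add, map_mul, map_pow]
      linear_combination -hxy)
    exact ⟨s, b, by linear_combination -hs⟩

theorem norm_surjective_quadratic_extension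
    (R : Type*) [CommRing R] [Fintype R] [IsLocalRing R] [IsPrincipalIdealRing R]
    (π : R) (hπ : IsLocalRing.maximalIdeal R = Ideal.span {π})
    (hqodd : Odd (Nat.card (IsLocalRing.ResidueField R)))
    (j : R) (hj : IsUnit j)
    (hnonsq : ¬ ∃ c : IsLocalRing.ResidueField R,
      c ^ 2 = IsLocalRing.residue R j) :
    ∀ r : R, IsUnit r → ∃ a b : R, a ^ 2 - j * b ^ 2 = r :=
  norm_surjective_quadratic_extension_general R hqodd j hj
end
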